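/- arXiv:2604.10899 — 7 statements merged into one kernel-verified Lean document; each statement's English description precedes it below -/
import Mathlib

section
/- Let f be a probability density on ℝ^d. If there exists a finite Gaussian mixture density g ∈ M such that KL(f‖g) < ∞, then ∫_{ℝ^d} ‖x‖² f(x) dx < ∞. In particular, if inf_{g ∈ M} KL(f‖g) = 0, then ∫_{ℝ^d} ‖x‖² f(x) dx < ∞. -/
open MeasureTheory Matrix
open scoped ENNReal NNReal BigOperators

/-- The Gaussian density on `ℝ^d` with mean `μ` and covariance matrix `S`. -/
noncomputable def gaussDensity {d : ℕ} (μ : EuclideanSpace ℝ (Fin d))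
    (S : Matrix (Fin d) (Fin d) ℝ) (x : EuclideanSpace ℝ (Fin d)) : ℝ :=
  (Real.sqrt ((2 * Real.pi) ^ d * S.det))⁻¹ *
    Real.exp (-(1 / 2) * ((fun i => x i - μ i) ⬝ᵥ S⁻¹.mulVec (fun i => x i - μ i)))

/-- `g` is a finite Gaussian mixture density on `ℝ^d`. -/
def IsGaussianMixture {d : ℕ} (g : EuclideanSpace ℝ (Fin d) → ℝ) : Prop :=
  ∃ (m : ℕ) (w : Fin m → ℝ) (μ : Fin m → EuclideanSpace ℝ (Fin d))
    (S : Fin m → Matrix (Fin d) (Fin d) ℝ),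
    (∀ j, 0 ≤ w j) ∧ (∑ j, w j = 1) ∧ (∀ j, (S j).PosDef) ∧
    ∀ x, g x = ∑ j, w j * gaussDensity (μ j) (S j) x

/-- `f` is a probability density with respect to the measure `μ`. -/
def IsProbDensity {α : Type*} [MeasurableSpace α] (μ : Measure α) (f : α → ℝ) : Prop :=
  Measurable f ∧ (∀ x, 0 ≤ f x) ∧ ∫⁻ x, ENNReal.ofReal (f x) ∂μ = 1

/-- Kullback–Leibler divergence `∫ f log (f/g)` as an extended real number:
it equals `+∞` exactly when the positive part of the integrand has infinite integral
(the negative part being automatically integrable for probability densities). -/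
noncomputable def KL {α : Type*} [MeasurableSpace α] (μ : Measure α) (f g : α → ℝ) : EReal :=
  ((∫⁻ x, ENNReal.ofReal (f x * Real.log (f x / g x)) ∂μ : ℝ≥0∞) : EReal)
  - ((∫⁻ x, ENNReal.ofReal (-(f x * Real.log (f x / g x))) ∂μ : ℝ≥0∞) : EReal)

/-- `log_+ t = max (log t) 0`; note `Real.log 0 = 0` so `logPlus 0 = 0`. -/
noncomputable def logPlus (t : ℝ) : ℝ := max (Real.log t) 0

/-- Uniform integrability of a family of nonnegative functions under `F`:
`lim_{M→∞} sup_m ∫_{X_m > M} X_m dF = 0`. -/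
def UIFamily {α : Type*} [MeasurableSpace α] (F : Measure α) (X : ℕ → α → ℝ) : Prop :=
  Filter.Tendsto (fun M : ℝ => ⨆ m, ∫⁻ x in {x | M < X m x}, ENNReal.ofReal (X m x) ∂F)
    Filter.atTop (nhds 0)

lemma quad_lb {d : ℕ} {Q : Matrix (Fin d) (Fin d) ℝ} (hQ : Q.PosDef) :
    ∃ ε : ℝ, 0 < ε ∧ ∀ v : EuclideanSpace ℝ (Fin d),
      ε * ‖v‖ ^ 2 ≤ (fun i => v i) ⬝ᵥ Q.mulVec (fun i => v i) := by

  set E := EuclideanSpace ℝ (Fin d)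
  have hcont : Continuous fun v : E => (fun i => v i) ⬝ᵥ Q.mulVec (fun i => v i) := by
    have hc : Continuous fun v : E => (fun i => v i) :=
      continuous_pi fun i => (EuclideanSpace.proj i).continuous
    exact hc.dotProduct (continuous_const.matrix_mulVec hc)
  rcases Nat.eq_zero_or_pos d with hd | hd
  · refine ⟨1, one_pos, fun v => ?_⟩
    subst hd
    have : v = 0 := Subsingleton.elim _ _
    simp [this]
  · have hne : (Metric.sphere (0 : E) 1).Nonempty := by
      refine ⟨EuclideanSpace.single ⟨0, hd⟩ 1, ?_⟩
      rw [mem_sphere_zero_iff_norm, EuclideanSpace.norm_single]; norm_num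
    obtain ⟨v₀, hv₀, hmin⟩ := (isCompact_sphere (0 : E) 1).exists_isMinOn hne hcont.continuousOn
    have hv₀norm : ‖v₀‖ = 1 := by simpa using hv₀
    have hv₀ne : v₀ ≠ 0 := by
      intro h; rw [h] at hv₀norm; simp at hv₀norm
    have hv₀ne' : (fun i => v₀ i) ≠ (0 : Fin d → ℝ) := by
      intro h
      apply hv₀ne
      ext i
      exact congrFun h i
    have hε : 0 < (fun i => v₀ i) ⬝ᵥ Q.mulVec (fun i => v₀ i) := by
      simpa [star_trivial] using hQ.dotProduct_mulVec_pos hv₀ne'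
    refine ⟨_, hε, fun v => ?_⟩
    rcases eq_or_ne v 0 with rfl | hv
    · simp
    · have hnv : 0 < ‖v‖ := norm_pos_iff.2 hv
      set w : E := ‖v‖⁻¹ • v with hw
      have hwsph : w ∈ Metric.sphere (0 : E) 1 := by
        simp [hw, norm_smul, abs_of_pos (inv_pos.2 hnv), inv_mul_cancel₀ hnv.ne']
      have hle := hmin hwsph
      have hquad : (fun i => w i) ⬝ᵥ Q.mulVec (fun i => w i)
          = ‖v‖⁻¹ ^ 2 * ((fun i => v i) ⬝ᵥ Q.mulVec (fun i => v i)) := by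
        have hwc : (fun i => w i) = (‖v‖⁻¹ • fun i => v i : Fin d → ℝ) := by
          funext i; simp [hw, PiLp.smul_apply]
        rw [hwc, Matrix.mulVec_smul, smul_dotProduct, dotProduct_smul]
        ring_nf
      have := hle
      simp only [IsMinOn, IsMinFilter] at hle
      have h2 : (fun i => v₀ i) ⬝ᵥ Q.mulVec (fun i => v₀ i)
          ≤ ‖v‖⁻¹ ^ 2 * ((fun i => v i) ⬝ᵥ Q.mulVec (fun i => v i)) := by
        rw [← hquad]; exact hmin hwsph
      have h3 := mul_le_mul_of_nonneg_left h2 (le_of_lt (pow_pos hnv 2))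
      calc ((fun i => v₀ i) ⬝ᵥ Q.mulVec (fun i => v₀ i)) * ‖v‖ ^ 2
            = ‖v‖ ^ 2 * ((fun i => v₀ i) ⬝ᵥ Q.mulVec (fun i => v₀ i)) := by ring
        _ ≤ ‖v‖ ^ 2 * (‖v‖⁻¹ ^ 2 * ((fun i => v i) ⬝ᵥ Q.mulVec (fun i => v i))) := h3
        _ = (fun i => v i) ⬝ᵥ Q.mulVec (fun i => v i) := by
            field_simp

lemma gauss_cont {d : ℕ} (μ : EuclideanSpace ℝ (Fin d)) (S : Matrix (Fin d) (Fin d) ℝ) :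
    Continuous (gaussDensity μ S) := by
  unfold gaussDensity
  refine continuous_const.mul (Real.continuous_exp.comp (continuous_const.mul ?_))
  have hc : Continuous fun v : EuclideanSpace ℝ (Fin d) => (fun i => v i - μ i) :=
    continuous_pi fun i => ((EuclideanSpace.proj i).continuous).sub continuous_const
  exact hc.dotProduct (continuous_const.matrix_mulVec hc)

lemma gauss_pos {d : ℕ} (μ : EuclideanSpace ℝ (Fin d)) {S : Matrix (Fin d) (Fin d) ℝ}
    (hS : S.PosDef) (x : EuclideanSpace ℝ (Fin d)) : 0 < gaussDensity μ S x := by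
  unfold gaussDensity
  have h1 : 0 < (2 * Real.pi) ^ d * S.det :=
    mul_pos (pow_pos (by positivity) d) hS.det_pos
  positivity

lemma sub_coords {d : ℕ} (x μ : EuclideanSpace ℝ (Fin d)) :
    (fun i => x i - μ i) = (fun i => (x - μ) i) := by
  funext i; simp

lemma gauss_bound {d : ℕ} (μ : EuclideanSpace ℝ (Fin d)) {S : Matrix (Fin d) (Fin d) ℝ}
    (hS : S.PosDef) : ∃ C a : ℝ, 0 < C ∧ 0 < a ∧
      ∀ x, gaussDensity μ S x ≤ C * Real.exp (-a * ‖x‖ ^ 2) := by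
  obtain ⟨ε, hε, hq⟩ := quad_lb hS.inv
  set c₀ : ℝ := (Real.sqrt ((2 * Real.pi) ^ d * S.det))⁻¹ with hc₀
  have hc₀pos : 0 < c₀ := by
    have h1 : 0 < (2 * Real.pi) ^ d * S.det :=
      mul_pos (pow_pos (by positivity) d) hS.det_pos
    positivity
  refine ⟨c₀ * Real.exp (ε / 2 * ‖μ‖ ^ 2), ε / 4, by positivity, by positivity, fun x => ?_⟩
  have hq' := hq (x - μ)
  have hexp : -(1 / 2) * ((fun i => x i - μ i) ⬝ᵥ S⁻¹.mulVec (fun i => x i - μ i))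
      ≤ -(ε / 4) * ‖x‖ ^ 2 + ε / 2 * ‖μ‖ ^ 2 := by
    rw [sub_coords]
    have hn : ‖x‖ ≤ ‖x - μ‖ + ‖μ‖ := by
      calc ‖x‖ = ‖x - μ + μ‖ := by rw [sub_add_cancel]
        _ ≤ ‖x - μ‖ + ‖μ‖ := norm_add_le _ _
    have h1 : ‖x‖ ^ 2 ≤ 2 * ‖x - μ‖ ^ 2 + 2 * ‖μ‖ ^ 2 := by
      have hsq := mul_self_le_mul_self (norm_nonneg x) hn
      have h2ab := two_mul_le_add_sq ‖x - μ‖ ‖μ‖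
      simp only [← sq] at hsq
      nlinarith [hsq, h2ab]
    have h2 : ε * (‖x‖ ^ 2 / 2 - ‖μ‖ ^ 2) ≤ ε * ‖x - μ‖ ^ 2 :=
      mul_le_mul_of_nonneg_left (by linarith) hε.le
    linarith [hq', h2]
  calc gaussDensity μ S x = c₀ * Real.exp (-(1 / 2) *
        ((fun i => x i - μ i) ⬝ᵥ S⁻¹.mulVec (fun i => x i - μ i))) := rfl
    _ ≤ c₀ * Real.exp (-(ε / 4) * ‖x‖ ^ 2 + ε / 2 * ‖μ‖ ^ 2) := by
        exact mul_le_mul_of_nonneg_left (Real.exp_le_exp.2 hexp) hc₀pos.le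
    _ = c₀ * Real.exp (ε / 2 * ‖μ‖ ^ 2) * Real.exp (-(ε / 4) * ‖x‖ ^ 2) := by
        rw [Real.exp_add]; ring

lemma exp_lintegral {d : ℕ} {a : ℝ} (ha : 0 < a) :
    ∫⁻ x : EuclideanSpace ℝ (Fin d), ENNReal.ofReal (Real.exp (-a * ‖x‖ ^ 2)) < ⊤ := by
  have hi : Integrable (fun x : EuclideanSpace ℝ (Fin d) => Real.exp (-a * ‖x‖ ^ 2)) := by
    have h := (GaussianFourier.integrable_cexp_neg_mul_sq_norm_add (V := EuclideanSpace ℝ (Fin d))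
      (b := (a : ℂ)) (by simpa using ha) 0 (0 : EuclideanSpace ℝ (Fin d))).re
    refine h.congr (Filter.Eventually.of_forall fun v => ?_)
    simp only [zero_mul, add_zero,
      show -(a : ℂ) * (‖v‖ : ℂ) ^ 2 = ((-a * ‖v‖ ^ 2 : ℝ) : ℂ) by push_cast; ring]
    exact Complex.exp_ofReal_re _
  exact lt_of_le_of_lt (lintegral_ofReal_le_lintegral_enorm _) hi.2

lemma mixture_props {d : ℕ} {g : EuclideanSpace ℝ (Fin d) → ℝ} (hg : IsGaussianMixture g) :
    Measurable g ∧ (∀ x, 0 < g x) ∧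
      ∃ C a : ℝ, 0 < a ∧ ∀ x, g x ≤ C * Real.exp (-a * ‖x‖ ^ 2) := by
  obtain ⟨m, w, μ, S, hw, hsum, hS, hgx⟩ := hg
  have hge : g = fun x => ∑ j, w j * gaussDensity (μ j) (S j) x := funext hgx
  have hmne : Nonempty (Fin m) := by
    rcases isEmpty_or_nonempty (Fin m) with h | h
    · exfalso
      rw [Finset.univ_eq_empty, Finset.sum_empty] at hsum
      exact one_ne_zero hsum.symm
    · exact h
  refine ⟨?_, ?_, ?_⟩
  · rw [hge]
    exact Finset.measurable_sum _ fun j _ =>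
      (measurable_const.mul (gauss_cont (μ j) (S j)).measurable)
  · intro x
    obtain ⟨j₀, hj₀⟩ : ∃ j, 0 < w j := by
      by_contra h
      push_neg at h
      have : (∑ j, w j) ≤ 0 := Finset.sum_nonpos fun j _ => h j
      rw [hsum] at this
      linarith
    rw [hgx]
    exact Finset.sum_pos' (fun j _ => mul_nonneg (hw j) (gauss_pos _ (hS j) x).le)
      ⟨j₀, Finset.mem_univ _, mul_pos hj₀ (gauss_pos _ (hS j₀) x)⟩
  · choose Cf af hCf haf hbf using fun j => gauss_bound (μ j) (hS j)
    set a := Finset.univ.inf' Finset.univ_nonempty af with ha_def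
    have ha : 0 < a := (Finset.lt_inf'_iff _).2 fun j _ => haf j
    refine ⟨∑ j, w j * Cf j, a, ha, fun x => ?_⟩
    rw [hgx]
    calc ∑ j, w j * gaussDensity (μ j) (S j) x
        ≤ ∑ j, w j * Cf j * Real.exp (-a * ‖x‖ ^ 2) := by
          refine Finset.sum_le_sum fun j _ => ?_
          have e2 : Real.exp (-af j * ‖x‖ ^ 2) ≤ Real.exp (-a * ‖x‖ ^ 2) := by
            apply Real.exp_le_exp.2
            have hle : a ≤ af j := Finset.inf'_le _ (Finset.mem_univ j)
            have := mul_le_mul_of_nonneg_right hle (sq_nonneg ‖x‖)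
            linarith
          have e1 : gaussDensity (μ j) (S j) x ≤ Cf j * Real.exp (-a * ‖x‖ ^ 2) :=
            (hbf j x).trans (mul_le_mul_of_nonneg_left e2 (hCf j).le)
          calc w j * gaussDensity (μ j) (S j) x
              ≤ w j * (Cf j * Real.exp (-a * ‖x‖ ^ 2)) :=
                mul_le_mul_of_nonneg_left e1 (hw j)
            _ = w j * Cf j * Real.exp (-a * ‖x‖ ^ 2) := by ring
      _ = (∑ j, w j * Cf j) * Real.exp (-a * ‖x‖ ^ 2) := (Finset.sum_mul _ _ _).symm


lemma ereal_top_sub {B : ℝ≥0∞} (hB : B ≠ ⊤) : (⊤ : EReal) - (B : EReal) = ⊤ := by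
  rw [sub_eq_add_neg, EReal.top_add_of_ne_bot]
  rw [Ne, EReal.neg_eq_bot_iff]
  exact fun h => hB (EReal.coe_ennreal_eq_top_iff.1 h)

lemma main_aux {d : ℕ} (f : EuclideanSpace ℝ (Fin d) → ℝ) (hf : IsProbDensity volume f)
    (g : EuclideanSpace ℝ (Fin d) → ℝ) (hg : IsGaussianMixture g)
    (hKL : KL volume f g < ⊤) :
    ∫⁻ x, ENNReal.ofReal (‖x‖ ^ 2 * f x) < ⊤ := by
  obtain ⟨hfm, hf0, _⟩ := hf
  obtain ⟨hgm, hgpos, C, a₀, ha₀, hbound⟩ := mixture_props hg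
  set a : ℝ := a₀ / 2 with ha_def
  have ha : 0 < a := by positivity
  have hC : 0 < C := by
    by_contra h
    push_neg at h
    have h1 : C * Real.exp (-a₀ * ‖(0 : EuclideanSpace ℝ (Fin d))‖ ^ 2) ≤ 0 :=
      mul_nonpos_of_nonpos_of_nonneg h (Real.exp_pos _).le
    linarith [(hgpos 0).trans_le (hbound 0)]
  have hexpint : ∀ b : ℝ, 0 < b →
      ∫⁻ x : EuclideanSpace ℝ (Fin d), ENNReal.ofReal (C * Real.exp (-b * ‖x‖ ^ 2)) < ⊤ := by
    intro b hb
    calc ∫⁻ x : EuclideanSpace ℝ (Fin d), ENNReal.ofReal (C * Real.exp (-b * ‖x‖ ^ 2))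
        = ∫⁻ x : EuclideanSpace ℝ (Fin d),
            ENNReal.ofReal C * ENNReal.ofReal (Real.exp (-b * ‖x‖ ^ 2)) := by
          simp_rw [← ENNReal.ofReal_mul hC.le]
      _ = ENNReal.ofReal C * ∫⁻ x : EuclideanSpace ℝ (Fin d),
            ENNReal.ofReal (Real.exp (-b * ‖x‖ ^ 2)) :=
          lintegral_const_mul' _ _ ENNReal.ofReal_ne_top
      _ < ⊤ := ENNReal.mul_lt_top ENNReal.ofReal_lt_top (exp_lintegral hb)
  -- the negative part is finite
  have hBle : ∀ x, -(f x * Real.log (f x / g x)) ≤ g x := by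
    intro x
    rcases eq_or_lt_of_le (hf0 x) with hfx | hfx
    · simp [← hfx]; exact (hgpos x).le
    · have hgx := hgpos x
      have h1 : Real.log (g x / f x) ≤ g x / f x - 1 :=
        Real.log_le_sub_one_of_pos (by positivity)
      have h2 : Real.log (f x / g x) = -Real.log (g x / f x) := by
        rw [Real.log_div hfx.ne' hgx.ne', Real.log_div hgx.ne' hfx.ne']; ring
      have h3 := mul_le_mul_of_nonneg_left h1 hfx.le
      have h4 : f x * (g x / f x - 1) = g x - f x := by field_simp
      rw [h2]
      nlinarith
  have hBfin : (∫⁻ x, ENNReal.ofReal (-(f x * Real.log (f x / g x)))) ≠ ⊤ := by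
    refine (lt_of_le_of_lt (lintegral_mono fun x =>
      ENNReal.ofReal_le_ofReal ((hBle x).trans (hbound x))) (hexpint a₀ ha₀)).ne
  -- the positive part is finite
  have hAfin : (∫⁻ x, ENNReal.ofReal (f x * Real.log (f x / g x))) ≠ ⊤ := by
    intro hA
    rw [KL, hA, EReal.coe_ennreal_top, ereal_top_sub hBfin] at hKL
    exact lt_irrefl _ hKL
  -- key pointwise inequality
  have hb2 : ∀ x, g x * Real.exp (a * ‖x‖ ^ 2) ≤ C * Real.exp (-a * ‖x‖ ^ 2) := by
    intro x
    have h1 := mul_le_mul_of_nonneg_right (hbound x) (Real.exp_pos (a * ‖x‖ ^ 2)).le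
    have h2 : C * Real.exp (-a₀ * ‖x‖ ^ 2) * Real.exp (a * ‖x‖ ^ 2)
        = C * Real.exp (-a * ‖x‖ ^ 2) := by
      rw [mul_assoc, ← Real.exp_add]
      congr 2
      rw [ha_def]; ring
    linarith
  have hpt : ∀ x, f x * (a * ‖x‖ ^ 2)
      ≤ f x * Real.log (f x / g x) + C * Real.exp (-a * ‖x‖ ^ 2) := by
    intro x
    rcases eq_or_lt_of_le (hf0 x) with hfx | hfx
    · have h0 : f x = 0 := hfx.symm
      rw [h0]
      simp only [zero_mul, zero_add]
      positivity
    · have hgx := hgpos x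
      have hEpos : (0 : ℝ) < Real.exp (a * ‖x‖ ^ 2) := Real.exp_pos _
      have hlog : Real.log (g x * Real.exp (a * ‖x‖ ^ 2) / f x)
          ≤ g x * Real.exp (a * ‖x‖ ^ 2) / f x - 1 :=
        Real.log_le_sub_one_of_pos (by positivity)
      have hiden : a * ‖x‖ ^ 2 = Real.log (f x / g x)
          + Real.log (g x * Real.exp (a * ‖x‖ ^ 2) / f x) := by
        rw [Real.log_div hfx.ne' hgx.ne', Real.log_div (by positivity) hfx.ne',
          Real.log_mul hgx.ne' (Real.exp_ne_zero _), Real.log_exp]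
        ring
      have h3 := mul_le_mul_of_nonneg_left hlog hfx.le
      have h4 : f x * (g x * Real.exp (a * ‖x‖ ^ 2) / f x - 1)
          = g x * Real.exp (a * ‖x‖ ^ 2) - f x := by field_simp
      have h5 := hb2 x
      have h6 : f x * (a * ‖x‖ ^ 2) = f x * Real.log (f x / g x)
          + f x * Real.log (g x * Real.exp (a * ‖x‖ ^ 2) / f x) := by
        conv_lhs => rw [hiden]
        ring
      nlinarith
  have hmeas : Measurable fun x : EuclideanSpace ℝ (Fin d) => ENNReal.ofReal (C * Real.exp (-a * ‖x‖ ^ 2)) := by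
    apply ENNReal.measurable_ofReal.comp
    exact (continuous_const.mul (Real.continuous_exp.comp
      ((continuous_const.mul ((continuous_norm).pow 2))))).measurable
  have hkey : ∫⁻ x, ENNReal.ofReal (f x * (a * ‖x‖ ^ 2)) < ⊤ := by
    have hle : ∫⁻ x, ENNReal.ofReal (f x * (a * ‖x‖ ^ 2))
        ≤ ∫⁻ x, (ENNReal.ofReal (f x * Real.log (f x / g x))
            + ENNReal.ofReal (C * Real.exp (-a * ‖x‖ ^ 2))) := by
      refine lintegral_mono fun x => ?_
      exact le_trans (ENNReal.ofReal_le_ofReal (hpt x)) (ENNReal.ofReal_add_le)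
    rw [lintegral_add_right _ hmeas] at hle
    exact lt_of_le_of_lt hle
      (ENNReal.add_lt_top.2 ⟨hAfin.lt_top, hexpint a ha⟩)
  have hrw : ∀ x : EuclideanSpace ℝ (Fin d), ENNReal.ofReal (‖x‖ ^ 2 * f x)
      = ENNReal.ofReal a⁻¹ * ENNReal.ofReal (f x * (a * ‖x‖ ^ 2)) := by
    intro x
    rw [← ENNReal.ofReal_mul (by positivity)]
    congr 1
    field_simp
  calc ∫⁻ x, ENNReal.ofReal (‖x‖ ^ 2 * f x)
      = ∫⁻ x, ENNReal.ofReal a⁻¹ * ENNReal.ofReal (f x * (a * ‖x‖ ^ 2)) := by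
        simp_rw [hrw]
    _ = ENNReal.ofReal a⁻¹ * ∫⁻ x, ENNReal.ofReal (f x * (a * ‖x‖ ^ 2)) :=
        lintegral_const_mul' _ _ ENNReal.ofReal_ne_top
    _ < ⊤ := ENNReal.mul_lt_top ENNReal.ofReal_lt_top hkey


/-- if some finite Gaussian mixture has finite KL divergence from `f`,
then `f` has a finite second moment; in particular this holds if
`inf_{g ∈ M} KL(f‖g) = 0`. -/
theorem second_moment_necessary {d : ℕ}
    (f : EuclideanSpace ℝ (Fin d) → ℝ) (hf : IsProbDensity volume f) :
    ((∃ g, IsGaussianMixture g ∧ KL volume f g < ⊤) →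
      ∫⁻ x, ENNReal.ofReal (‖x‖ ^ 2 * f x) < ⊤) ∧
    ((⨅ g ∈ {g | IsGaussianMixture g}, KL volume f g) = 0 →
      ∫⁻ x, ENNReal.ofReal (‖x‖ ^ 2 * f x) < ⊤) := by
  constructor
  · rintro ⟨g, hg, hKL⟩
    exact main_aux f hf g hg hKL
  · intro h0
    have hlt : (⨅ g ∈ {g | IsGaussianMixture g}, KL volume f g) < ⊤ := by
      rw [h0]; exact lt_of_le_of_ne le_top (by simp)
    rw [iInf_lt_iff] at hlt
    obtain ⟨g, hg⟩ := hlt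
    rw [iInf_lt_iff] at hg
    obtain ⟨hgm, hKL⟩ := hg
    exact main_aux f hf g hgm hKL
end

section
/- Let f be a probability density on ℝ^d with associated probability measure F, and let (g_m)_{m≥1} be probability densities on ℝ^d such that: (i) g_m(x) > 0 for F-almost every x; (ii) f(x)/g_m(x) → 1 as m → ∞ for F-almost every x; (iii) the family (L_m)_{m≥1}, where L_m = log_+(f/g_m), is uniformly integrable under F. Then KL(f‖g_m) → 0 as m → ∞. -/
open MeasureTheory Matrix
open scoped ENNReal NNReal BigOperators

lemma ereal_coe_ennreal_eq (p : ℝ≥0∞) (hp : p ≠ ⊤) : (p : EReal) = ((p.toReal : ℝ) : EReal) := by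
  conv_lhs => rw [← ENNReal.ofReal_toReal hp]
  rw [EReal.coe_ennreal_ofReal, max_eq_left ENNReal.toReal_nonneg]

/-- if the likelihood ratios `f/g_m` converge to `1` F-a.e., the `g_m`
are F-a.e. positive, and the family `log_+(f/g_m)` is uniformly integrable under `F`,
then `KL(f‖g_m) → 0`. -/
theorem ui_pointwise_implies_KL_convergence {d : ℕ}
    (f : EuclideanSpace ℝ (Fin d) → ℝ) (hf : IsProbDensity volume f)
    (F : Measure (EuclideanSpace ℝ (Fin d)))
    (hF : F = volume.withDensity fun x => ENNReal.ofReal (f x))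
    (g : ℕ → EuclideanSpace ℝ (Fin d) → ℝ)
    (hg : ∀ m, IsProbDensity volume (g m))
    (hpos : ∀ m, ∀ᵐ x ∂F, 0 < g m x)
    (hratio : ∀ᵐ x ∂F, Filter.Tendsto (fun m => f x / g m x) Filter.atTop (nhds 1))
    (hUI : UIFamily F fun m x => logPlus (f x / g m x)) :
    Filter.Tendsto (fun m => KL volume f (g m)) Filter.atTop (nhds (0 : EReal)) := by
  obtain ⟨hfm, hf0, hf1⟩ := hf
  have hgm : ∀ m, Measurable (g m) := fun m => (hg m).1
  have hg0 : ∀ m x, 0 ≤ g m x := fun m => (hg m).2.1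
  have hg1 : ∀ m, ∫⁻ x, ENNReal.ofReal (g m x) ∂volume = 1 := fun m => (hg m).2.2
  have hfm' : Measurable fun x => ENNReal.ofReal (f x) := ENNReal.measurable_ofReal.comp hfm
  set P : ℕ → ℝ≥0∞ := fun m => ∫⁻ x, ENNReal.ofReal (f x * Real.log (f x / g m x)) ∂volume
    with hP_def
  set N : ℕ → ℝ≥0∞ := fun m => ∫⁻ x, ENNReal.ofReal (-(f x * Real.log (f x / g m x))) ∂volume
    with hN_def
  have hLm : ∀ m, Measurable fun x => logPlus (f x / g m x) := by
    intro m
    exact (Real.measurable_log.comp (hfm.div (hgm m))).max measurable_const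
  have hFuniv : F Set.univ = 1 := by
    rw [hF, withDensity_apply _ MeasurableSet.univ, setLIntegral_univ, hf1]
  -- Step 1: P m equals the F-integral of logPlus of the ratio
  have key1 : ∀ m, P m = ∫⁻ x, ENNReal.ofReal (logPlus (f x / g m x)) ∂F := by
    intro m
    have hpt : ∀ x, ENNReal.ofReal (f x * Real.log (f x / g m x))
        = ENNReal.ofReal (f x) * ENNReal.ofReal (logPlus (f x / g m x)) := by
      intro x
      rcases le_or_gt 0 (Real.log (f x / g m x)) with h | h
      · rw [ENNReal.ofReal_mul (hf0 x)]
        congr 2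
        unfold logPlus
        rw [max_eq_left h]
      · have h1 : f x * Real.log (f x / g m x) ≤ 0 :=
          mul_nonpos_of_nonneg_of_nonpos (hf0 x) h.le
        rw [ENNReal.ofReal_eq_zero.mpr h1]
        unfold logPlus
        rw [max_eq_right h.le, ENNReal.ofReal_zero, mul_zero]
    have hmeasL : Measurable fun x => ENNReal.ofReal (logPlus (f x / g m x)) :=
      ENNReal.measurable_ofReal.comp (hLm m)
    rw [hP_def]
    simp only
    rw [lintegral_congr hpt, hF, lintegral_withDensity_eq_lintegral_mul volume hfm' hmeasL]
    rfl
  -- Step 2: P m → 0 (Vitali-type argument)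
  have hP : Filter.Tendsto P Filter.atTop (nhds 0) := by
    rw [ENNReal.tendsto_nhds_zero]
    intro ε hε
    obtain ⟨M, hsup, hM1⟩ :=
      (((ENNReal.tendsto_nhds_zero.mp hUI (ε / 2) (ENNReal.half_pos hε.ne')).and
        (Filter.eventually_ge_atTop (1 : ℝ)))).exists
    have hM0 : (0 : ℝ) ≤ M := le_trans zero_le_one hM1
    have hsup' : ∀ m, ∫⁻ x in {x | M < logPlus (f x / g m x)},
        ENNReal.ofReal (logPlus (f x / g m x)) ∂F ≤ ε / 2 := by
      intro m
      exact le_trans (le_iSup (fun m => ∫⁻ x in {x | M < logPlus (f x / g m x)},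
        ENNReal.ofReal (logPlus (f x / g m x)) ∂F) m) hsup
    -- truncated integrals tend to 0 by dominated convergence
    have hmin : Filter.Tendsto
        (fun m => ∫⁻ x, ENNReal.ofReal (min (logPlus (f x / g m x)) M) ∂F)
        Filter.atTop (nhds 0) := by
      have h := tendsto_lintegral_of_dominated_convergence (μ := F)
        (F := fun m x => ENNReal.ofReal (min (logPlus (f x / g m x)) M))
        (f := fun _ => 0) (fun _ => ENNReal.ofReal M)
        (fun m => ENNReal.measurable_ofReal.comp ((hLm m).min measurable_const))
        (fun m => Filter.Eventually.of_forall fun x =>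
          ENNReal.ofReal_le_ofReal (min_le_right _ _))
        (by rw [lintegral_const, hFuniv, mul_one]; exact ENNReal.ofReal_ne_top)
        ?_
      · simpa using h
      · filter_upwards [hratio] with x hx
        have hcont : ContinuousAt (fun t : ℝ => ENNReal.ofReal (min (logPlus t) M)) 1 := by
          apply ENNReal.continuous_ofReal.continuousAt.comp
          exact (((Real.continuousAt_log one_ne_zero).max continuousAt_const).min
            continuousAt_const)
        have := hcont.tendsto.comp hx
        have h1 : logPlus (1 : ℝ) = 0 := by simp [logPlus, Real.log_one]
        simpa [Function.comp_def, h1, min_eq_left hM0] using this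
    -- split inequality
    have hsplit : ∀ m, ∫⁻ x, ENNReal.ofReal (logPlus (f x / g m x)) ∂F ≤
        (∫⁻ x, ENNReal.ofReal (min (logPlus (f x / g m x)) M) ∂F) +
        ∫⁻ x in {x | M < logPlus (f x / g m x)},
          ENNReal.ofReal (logPlus (f x / g m x)) ∂F := by
      intro m
      have hms : MeasurableSet {x | M < logPlus (f x / g m x)} :=
        measurableSet_lt measurable_const (hLm m)
      have hmeas : Measurable fun x => ENNReal.ofReal (min (logPlus (f x / g m x)) M) :=
        ENNReal.measurable_ofReal.comp ((hLm m).min measurable_const)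
      have ptwise : ∀ x, ENNReal.ofReal (logPlus (f x / g m x)) ≤
          ENNReal.ofReal (min (logPlus (f x / g m x)) M) +
          Set.indicator {x | M < logPlus (f x / g m x)}
            (fun x => ENNReal.ofReal (logPlus (f x / g m x))) x := by
        intro x
        rw [Set.indicator_apply]
        by_cases h : x ∈ {x | M < logPlus (f x / g m x)}
        · rw [if_pos h]
          exact le_add_self
        · rw [if_neg h, add_zero]
          simp only [Set.mem_setOf_eq, not_lt] at h
          rw [min_eq_left h]
      calc ∫⁻ x, ENNReal.ofReal (logPlus (f x / g m x)) ∂F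
          ≤ ∫⁻ x, (ENNReal.ofReal (min (logPlus (f x / g m x)) M) +
              Set.indicator {x | M < logPlus (f x / g m x)}
                (fun x => ENNReal.ofReal (logPlus (f x / g m x))) x) ∂F :=
            lintegral_mono ptwise
        _ = _ := by rw [lintegral_add_left hmeas, lintegral_indicator hms]
    filter_upwards [ENNReal.tendsto_nhds_zero.mp hmin (ε / 2) (ENNReal.half_pos hε.ne')]
      with m hm
    rw [key1 m]
    calc ∫⁻ x, ENNReal.ofReal (logPlus (f x / g m x)) ∂F
        ≤ _ + _ := hsplit m
      _ ≤ ε / 2 + ε / 2 := add_le_add hm (hsup' m)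
      _ = ε := ENNReal.add_halves ε
  -- Step 3: N m ≤ P m
  have key3 : ∀ m, N m ≤ P m := by
    intro m
    have hpos' : ∀ᵐ x ∂volume, ENNReal.ofReal (f x) ≠ 0 → 0 < g m x := by
      have := hpos m
      rw [hF] at this
      exact (ae_withDensity_iff hfm').mp this
    have hptwise : ∀ᵐ x ∂volume,
        ENNReal.ofReal (-(f x * Real.log (f x / g m x))) + ENNReal.ofReal (f x)
        ≤ ENNReal.ofReal (g m x) + ENNReal.ofReal (f x * Real.log (f x / g m x)) := by
      filter_upwards [hpos'] with x hx
      rcases eq_or_lt_of_le (hf0 x) with hfx | hfx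
      · simp [← hfx]
      · have hgx : 0 < g m x := hx (by simpa [ENNReal.ofReal_eq_zero, not_le] using hfx)
        set u := f x * Real.log (f x / g m x) with hu
        have hkey : -u ≤ g m x - f x := by
          have hlog : Real.log (g m x / f x) ≤ g m x / f x - 1 :=
            Real.log_le_sub_one_of_pos (div_pos hgx hfx)
          have hneg : -u = f x * Real.log (g m x / f x) := by
            rw [hu, ← mul_neg, ← Real.log_inv, inv_div]
          rw [hneg]
          calc f x * Real.log (g m x / f x) ≤ f x * (g m x / f x - 1) :=
                mul_le_mul_of_nonneg_left hlog (hf0 x)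
            _ = g m x - f x := by field_simp
        rcases le_or_gt u 0 with hu0 | hu0
        · have h1 : 0 ≤ -u := neg_nonneg.mpr hu0
          rw [← ENNReal.ofReal_add h1 (hf0 x)]
          calc ENNReal.ofReal (-u + f x) ≤ ENNReal.ofReal (g m x) :=
                ENNReal.ofReal_le_ofReal (by linarith)
            _ ≤ ENNReal.ofReal (g m x) + ENNReal.ofReal u := le_self_add
        · rw [ENNReal.ofReal_eq_zero.mpr (by linarith : -u ≤ 0), zero_add,
            ← ENNReal.ofReal_add (hg0 m x) hu0.le]
          exact ENNReal.ofReal_le_ofReal (by linarith)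
    have hmeasN : Measurable fun x => ENNReal.ofReal (-(f x * Real.log (f x / g m x))) :=
      ENNReal.measurable_ofReal.comp
        ((hfm.mul (Real.measurable_log.comp (hfm.div (hgm m)))).neg)
    have hmeasg : Measurable fun x => ENNReal.ofReal (g m x) :=
      ENNReal.measurable_ofReal.comp (hgm m)
    have e1 : ∫⁻ x, (ENNReal.ofReal (-(f x * Real.log (f x / g m x)))
        + ENNReal.ofReal (f x)) ∂volume = N m + 1 := by
      rw [lintegral_add_left hmeasN, hf1]
    have e2 : ∫⁻ x, (ENNReal.ofReal (g m x)
        + ENNReal.ofReal (f x * Real.log (f x / g m x))) ∂volume = 1 + P m := by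
      rw [lintegral_add_left hmeasg, hg1]
    have hineq : N m + 1 ≤ 1 + P m := by
      rw [← e1, ← e2]
      exact lintegral_mono_ae hptwise
    rw [add_comm (1 : ℝ≥0∞) (P m)] at hineq
    exact (ENNReal.add_le_add_iff_right ENNReal.one_ne_top).mp hineq
  -- Step 4: N m → 0
  have hN : Filter.Tendsto N Filter.atTop (nhds 0) :=
    tendsto_of_tendsto_of_tendsto_of_le_of_le tendsto_const_nhds hP
      (fun m => zero_le) key3
  -- Step 5: conclude
  have hPreal : Filter.Tendsto (fun m => (P m).toReal) Filter.atTop (nhds 0) := by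
    have := (ENNReal.tendsto_toReal (a := 0) (by simp)).comp hP
    simpa [Function.comp_def] using this
  have hNreal : Filter.Tendsto (fun m => (N m).toReal) Filter.atTop (nhds 0) := by
    have := (ENNReal.tendsto_toReal (a := 0) (by simp)).comp hN
    simpa [Function.comp_def] using this
  have hsub : Filter.Tendsto (fun m => ((P m).toReal - (N m).toReal : ℝ))
      Filter.atTop (nhds 0) := by
    simpa using hPreal.sub hNreal
  have hcoe : Filter.Tendsto (fun m => (((P m).toReal - (N m).toReal : ℝ) : EReal))
      Filter.atTop (nhds (0 : EReal)) := by
    have := (EReal.tendsto_coe (f := Filter.atTop)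
      (m := fun m => ((P m).toReal - (N m).toReal : ℝ)) (a := 0)).mpr hsub
    simpa using this
  apply hcoe.congr'
  filter_upwards [ENNReal.tendsto_nhds_zero.mp hP 1 zero_lt_one] with m hm
  have hPfin : P m ≠ ⊤ := (lt_of_le_of_lt hm ENNReal.one_lt_top).ne
  have hNfin : N m ≠ ⊤ := (lt_of_le_of_lt (key3 m) (lt_of_le_of_lt hm ENNReal.one_lt_top)).ne
  show (((P m).toReal - (N m).toReal : ℝ) : EReal) = KL volume f (g m)
  rw [KL]
  rw [show ((∫⁻ x, ENNReal.ofReal (f x * Real.log (f x / g m x)) ∂volume : ℝ≥0∞) : EReal)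
      = ((P m : ℝ≥0∞) : EReal) from rfl,
    show ((∫⁻ x, ENNReal.ofReal (-(f x * Real.log (f x / g m x))) ∂volume : ℝ≥0∞) : EReal)
      = ((N m : ℝ≥0∞) : EReal) from rfl,
    ereal_coe_ennreal_eq _ hPfin, ereal_coe_ennreal_eq _ hNfin, ← EReal.coe_sub]
end

section
/- Let q be a probability density on ℝ^d with associated probability measure Q, let r > 0, and suppose that for Q-almost every y in supp(q) = {x : q(x) > 0} there exist an axis-aligned closed cube C(y) of side length r containing y and an axis-aligned closed cube Q_y ⊆ C(y) ∩ supp(q) of side length r/2 having y as one of its vertices. Define D_r(y) = log(q(y) / inf_{z ∈ C(y)} q(z)) ∈ [0, ∞]. Then log_+ q(y) ≤ D_r(y) + d·log_+(2/r) for Q-almost every y ∈ supp(q), and consequently ∫_{ℝ^d} q(y) log_+ q(y) dy ≤ ∫_{supp(q)} D_r(y) dQ(y) + d·log_+(2/r). -/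
/-!
A probability density is at least `m := inf_{C(y)} q` on the cube `Q_y ⊆ C(y)` of volume
`(r/2)^d`, so `m ≤ (2/r)^d`. Writing `log q(y) = log (q(y)/m) + log m` then bounds `log_+ q(y)`
by `D_r(y) + d log_+ (2/r)`, and integrating against `Q` gives the entropy bound.
-/

open MeasureTheory Matrix
open scoped ENNReal NNReal BigOperators

open Set

noncomputable def logOscillation {α : Type*} (q : α → ℝ) (S : Set α) (y : α) : ℝ≥0∞ :=
  if sInf (q '' S) ≤ 0 then ⊤ else ENNReal.ofReal (Real.log (q y / sInf (q '' S)))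

theorem logPlus_nonneg (t : ℝ) : 0 ≤ logPlus t := le_max_right _ _

theorem logPlus_pow (x : ℝ) (n : ℕ) : logPlus (x ^ n) = n * logPlus x := by
  rw [logPlus, logPlus, Real.log_pow, mul_max_of_nonneg _ _ n.cast_nonneg, mul_zero]

theorem logPlus_le_log_div_add_logPlus {t m K : ℝ} (hm : 0 < m) (hmt : m ≤ t) (hmK : m ≤ K) :
    logPlus t ≤ Real.log (t / m) + logPlus K := by
  have hdiv : 0 ≤ Real.log (t / m) := Real.log_nonneg ((one_le_div hm).2 hmt)
  rcases le_total (Real.log t) 0 with ht | ht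
  · rw [logPlus, max_eq_right ht]
    linarith [logPlus_nonneg K]
  · calc logPlus t = Real.log (t / m) + Real.log m := by
          rw [logPlus, max_eq_left ht, Real.log_div (hm.trans_le hmt).ne' hm.ne']
          ring
      _ ≤ Real.log (t / m) + logPlus K := by
          gcongr
          exact (Real.log_le_log hm hmK).trans (le_max_left _ _)

namespace IsProbDensity

variable {α : Type*} [MeasurableSpace α] {μ : Measure α} {f : α → ℝ}

theorem isProbabilityMeasure_withDensity (hf : IsProbDensity μ f) :
    IsProbabilityMeasure (μ.withDensity fun x => ENNReal.ofReal (f x)) :=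
  ⟨by rw [withDensity_apply _ MeasurableSet.univ, Measure.restrict_univ]; exact hf.2.2⟩

theorem ofReal_sInf_image_mul_measure_le_one (hf : IsProbDensity μ f) {S B : Set α}
    (hBS : B ⊆ S) : ENNReal.ofReal (sInf (f '' S)) * μ B ≤ 1 := by
  have hbdd : BddBelow (f '' S) := ⟨0, by rintro _ ⟨z, -, rfl⟩; exact hf.2.1 z⟩
  calc ENNReal.ofReal (sInf (f '' S)) * μ B
      = ∫⁻ _ in B, ENNReal.ofReal (sInf (f '' S)) ∂μ := (setLIntegral_const _ _).symm
    _ ≤ ∫⁻ x in B, ENNReal.ofReal (f x) ∂μ :=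
        setLIntegral_mono hf.1.ennreal_ofReal fun x hx =>
          ENNReal.ofReal_le_ofReal (csInf_le hbdd ⟨x, hBS hx, rfl⟩)
    _ ≤ ∫⁻ x, ENNReal.ofReal (f x) ∂μ := setLIntegral_le_lintegral _ _
    _ = 1 := hf.2.2

theorem lintegral_ofReal_mul_eq_setLIntegral_withDensity (hf : IsProbDensity μ f)
    {g : α → ℝ} (hg : Measurable g) :
    ∫⁻ x, ENNReal.ofReal (f x * g x) ∂μ =
      ∫⁻ x in {x | 0 < f x}, ENNReal.ofReal (g x) ∂μ.withDensity fun x => ENNReal.ofReal (f x) := by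
  have hpos : MeasurableSet {x | 0 < f x} := measurableSet_lt measurable_const hf.1
  rw [setLIntegral_withDensity_eq_setLIntegral_mul _ hf.1.ennreal_ofReal hg.ennreal_ofReal hpos]
  refine (lintegral_congr fun x => ENNReal.ofReal_mul (hf.2.1 x)).trans
    (setLIntegral_eq_of_support_subset fun x hx => ?_).symm
  by_contra hfx
  exact hx (by simp [ENNReal.ofReal_eq_zero.2 (not_lt.1 hfx)])

end IsProbDensity

section Cube

variable {d : ℕ} {q : (Fin d → ℝ) → ℝ} {r : ℝ}

theorem IsProbDensity.sInf_image_le_of_cube_subset (hq : IsProbDensity volume q) (hr : 0 < r)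
    {S : Set (Fin d → ℝ)} {a : Fin d → ℝ} (haS : Icc a (fun i => a i + r / 2) ⊆ S)
    (hS : 0 < sInf (q '' S)) : sInf (q '' S) ≤ (2 / r) ^ d := by
  have hvol := hq.ofReal_sInf_image_mul_measure_le_one haS
  rw [Real.volume_Icc_pi] at hvol
  simp only [add_sub_cancel_left, Finset.prod_const, Finset.card_univ, Fintype.card_fin] at hvol
  rw [← ENNReal.ofReal_pow (by positivity), ← ENNReal.ofReal_mul hS.le,
    ENNReal.ofReal_le_one] at hvol
  rwa [div_pow, le_div_iff₀ (by positivity), ← div_le_one (by positivity), mul_div_assoc,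
    ← div_pow]

theorem ofReal_logPlus_le_logOscillation_add (hq : IsProbDensity volume q) (hr : 0 < r)
    {S : Set (Fin d → ℝ)} {y a : Fin d → ℝ} (hyS : y ∈ S)
    (haS : Icc a (fun i => a i + r / 2) ⊆ S) :
    ENNReal.ofReal (logPlus (q y)) ≤
      logOscillation q S y + d * ENNReal.ofReal (logPlus (2 / r)) := by
  unfold logOscillation
  split_ifs with hS
  · simp
  rw [not_le] at hS
  have hbdd : BddBelow (q '' S) := ⟨0, by rintro _ ⟨z, -, rfl⟩; exact hq.2.1 z⟩
  have hlog := logPlus_le_log_div_add_logPlus hS (csInf_le hbdd ⟨y, hyS, rfl⟩)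
    (hq.sInf_image_le_of_cube_subset hr haS hS)
  rw [logPlus_pow] at hlog
  calc ENNReal.ofReal (logPlus (q y))
      ≤ ENNReal.ofReal (Real.log (q y / sInf (q '' S)) + d * logPlus (2 / r)) :=
        ENNReal.ofReal_le_ofReal hlog
    _ ≤ _ := by
        refine ENNReal.ofReal_add_le.trans_eq ?_
        rw [ENNReal.ofReal_mul d.cast_nonneg, ENNReal.ofReal_natCast]

end Cube

theorem setLIntegral_add_const_le {α : Type*} [MeasurableSpace α] {μ : Measure α}
    [IsProbabilityMeasure μ] (f : α → ℝ≥0∞) (s : Set α) (c : ℝ≥0∞) :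
    ∫⁻ x in s, f x + c ∂μ ≤ ∫⁻ x in s, f x ∂μ + c := by
  rw [lintegral_add_right _ measurable_const, setLIntegral_const]
  gcongr
  exact mul_le_of_le_one_right' prob_le_one

/-- entropy bound on the fixed-scale class.  Cubes are axis-aligned
closed cubes `Set.Icc c (c + r • 1)` in `ℝ^d = Fin d → ℝ`.  `D` is the log-oscillation
`log (q y / inf_{z ∈ C y} q z)`, valued in `ℝ≥0∞`, equal to `⊤` when the infimum is `0`. -/
theorem entropy_bound_fixed_scale {d : ℕ}
    (q : (Fin d → ℝ) → ℝ) (hq : IsProbDensity volume q)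
    (Q : Measure (Fin d → ℝ))
    (hQ : Q = volume.withDensity fun x => ENNReal.ofReal (q x))
    (r : ℝ) (hr : 0 < r)
    (C : (Fin d → ℝ) → Set (Fin d → ℝ))
    (hC : ∀ᵐ y ∂Q, 0 < q y →
      (∃ c : Fin d → ℝ, C y = Set.Icc c (fun i => c i + r)) ∧ y ∈ C y ∧
      ∃ a : Fin d → ℝ,
        Set.Icc a (fun i => a i + r / 2) ⊆ C y ∩ {x | 0 < q x} ∧
        (∀ i, a i = y i ∨ a i + r / 2 = y i))
    (D : (Fin d → ℝ) → ℝ≥0∞)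
    (hD : ∀ y, D y = if sInf (q '' C y) ≤ 0 then ⊤
        else ENNReal.ofReal (Real.log (q y / sInf (q '' C y)))) :
    (∀ᵐ y ∂Q, 0 < q y →
        ENNReal.ofReal (logPlus (q y)) ≤ D y + d * ENNReal.ofReal (logPlus (2 / r))) ∧
    ∫⁻ y, ENNReal.ofReal (q y * logPlus (q y)) ≤
      (∫⁻ y in {x | 0 < q x}, D y ∂Q) + d * ENNReal.ofReal (logPlus (2 / r)) := by
  have hpointwise : ∀ᵐ y ∂Q, 0 < q y →
      ENNReal.ofReal (logPlus (q y)) ≤ D y + d * ENNReal.ofReal (logPlus (2 / r)) := by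
    filter_upwards [hC] with y hy hqy
    obtain ⟨-, hyC, a, haC, -⟩ := hy hqy
    rw [hD]
    exact ofReal_logPlus_le_logOscillation_add hq hr hyC (haC.trans inter_subset_left)
  refine ⟨hpointwise, ?_⟩
  subst hQ
  have := hq.isProbabilityMeasure_withDensity
  have hlogPlus : Measurable fun y => logPlus (q y) :=
    (Real.measurable_log.comp hq.1).max measurable_const
  calc ∫⁻ y, ENNReal.ofReal (q y * logPlus (q y))
      = ∫⁻ y in {x | 0 < q x}, ENNReal.ofReal (logPlus (q y))
          ∂volume.withDensity fun x => ENNReal.ofReal (q x) :=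
        hq.lintegral_ofReal_mul_eq_setLIntegral_withDensity hlogPlus
    _ ≤ ∫⁻ y in {x | 0 < q x}, D y + d * ENNReal.ofReal (logPlus (2 / r))
          ∂volume.withDensity fun x => ENNReal.ofReal (q x) :=
        setLIntegral_mono_ae' (measurableSet_lt measurable_const hq.1) hpointwise
    _ ≤ _ := setLIntegral_add_const_le _ _ _
end

section
/- Let f be a probability density on ℝ^d with associated probability measure F, and let supp(f) = ⨆_{ℓ≥1} Y_ℓ be a countable measurable partition with p_ℓ = F(Y_ℓ). For each ℓ with p_ℓ > 0, let f_ℓ = f·1_{Y_ℓ}/p_ℓ with probability measure F_ℓ, and suppose there exist a scale r_ℓ > 0 and, for F_ℓ-almost every y ∈ Y_ℓ, an axis-aligned closed cube C_ℓ(y) of side r_ℓ containing y and an axis-aligned closed cube Q_y ⊆ C_ℓ(y) ∩ supp(f_ℓ) of side r_ℓ/2 with a vertex at y; set D_ℓ(y) = log(f_ℓ(y)/inf_{z ∈ C_ℓ(y)} f_ℓ(z)). Assume Σ_{ℓ: p_ℓ>0} p_ℓ ∫_{Y_ℓ} D_ℓ dF_ℓ < ∞ and Σ_{ℓ: p_ℓ>0}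 p_ℓ log_+(1/r_ℓ) < ∞. Then ∫_{ℝ^d} f(y) log_+ f(y) dy ≤ Σ_{ℓ: p_ℓ>0} p_ℓ ∫_{Y_ℓ} D_ℓ dF_ℓ + d·Σ_{ℓ: p_ℓ>0} p_ℓ log_+(2/r_ℓ); in particular ∫_{ℝ^d} f(y) log_+ f(y) dy < ∞. -/
open MeasureTheory Matrix
open scoped ENNReal NNReal BigOperators

/-- entropy bound on the countable-scale support-aware class.
The support of `f` is partitioned into measurable pieces `Y ℓ` of mass `p ℓ`;
on each piece of positive mass the normalized restriction `fℓ ℓ` satisfies the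
fixed-scale cube condition at scale `r ℓ`, and the two weighted sums are finite.
(In `ℝ≥0∞`, terms with `p ℓ = 0` vanish automatically since `0 * x = 0`.) -/
theorem entropy_bound_countable_scale {d : ℕ}
    (f : (Fin d → ℝ) → ℝ) (hf : IsProbDensity volume f)
    (F : Measure (Fin d → ℝ))
    (hF : F = volume.withDensity fun x => ENNReal.ofReal (f x))
    (Y : ℕ → Set (Fin d → ℝ))
    (hYmeas : ∀ ℓ, MeasurableSet (Y ℓ))
    (hYdisj : Pairwise (Function.onFun Disjoint Y))
    (hYunion : (⋃ ℓ, Y ℓ) = {x | 0 < f x})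
    (p : ℕ → ℝ≥0∞) (hp : ∀ ℓ, p ℓ = F (Y ℓ))
    (fℓ : ℕ → (Fin d → ℝ) → ℝ)
    (hfℓ : ∀ ℓ, p ℓ ≠ 0 → ∀ x, fℓ ℓ x = Set.indicator (Y ℓ) f x / (p ℓ).toReal)
    (Fℓ : ℕ → Measure (Fin d → ℝ))
    (hFℓ : ∀ ℓ, Fℓ ℓ = volume.withDensity fun x => ENNReal.ofReal (fℓ ℓ x))
    (r : ℕ → ℝ)
    (C : ℕ → (Fin d → ℝ) → Set (Fin d → ℝ))
    (hgeom : ∀ ℓ, p ℓ ≠ 0 → 0 < r ℓ ∧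
      ∀ᵐ y ∂(Fℓ ℓ), y ∈ Y ℓ →
        (∃ c : Fin d → ℝ, C ℓ y = Set.Icc c (fun i => c i + r ℓ)) ∧ y ∈ C ℓ y ∧
        ∃ a : Fin d → ℝ,
          Set.Icc a (fun i => a i + r ℓ / 2) ⊆ C ℓ y ∩ {x | 0 < fℓ ℓ x} ∧
          (∀ i, a i = y i ∨ a i + r ℓ / 2 = y i))
    (D : ℕ → (Fin d → ℝ) → ℝ≥0∞)
    (hD : ∀ ℓ y, D ℓ y = if sInf (fℓ ℓ '' C ℓ y) ≤ 0 then ⊤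
        else ENNReal.ofReal (Real.log (fℓ ℓ y / sInf (fℓ ℓ '' C ℓ y))))
    (hDsum : ∑' ℓ, p ℓ * ∫⁻ y in Y ℓ, D ℓ y ∂(Fℓ ℓ) < ⊤)
    (hrsum : ∑' ℓ, p ℓ * ENNReal.ofReal (logPlus (1 / r ℓ)) < ⊤) :
    (∫⁻ y, ENNReal.ofReal (f y * logPlus (f y)) ≤
      (∑' ℓ, p ℓ * ∫⁻ y in Y ℓ, D ℓ y ∂(Fℓ ℓ)) +
        d * ∑' ℓ, p ℓ * ENNReal.ofReal (logPlus (2 / r ℓ))) ∧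
    ∫⁻ y, ENNReal.ofReal (f y * logPlus (f y)) < ⊤ := by
  classical
  obtain ⟨hfm, hfnn, hfint⟩ := hf
  set g : (Fin d → ℝ) → ℝ≥0∞ := fun y => ENNReal.ofReal (f y * logPlus (f y)) with hg
  -- F of the whole space is 1
  have hFuniv : F Set.univ = 1 := by
    rw [hF, withDensity_apply _ MeasurableSet.univ, Measure.restrict_univ]
    exact hfint
  have hFY : ∀ ℓ, F (Y ℓ) = ∫⁻ x in Y ℓ, ENNReal.ofReal (f x) := by
    intro ℓ; rw [hF, withDensity_apply _ (hYmeas ℓ)]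
  have hp_le : ∀ ℓ, p ℓ ≤ 1 := by
    intro ℓ; rw [hp ℓ, ← hFuniv]; exact measure_mono (Set.subset_univ _)
  have hp_ne_top : ∀ ℓ, p ℓ ≠ ⊤ := fun ℓ => ne_top_of_le_ne_top ENNReal.one_ne_top (hp_le ℓ)
  -- facts about fℓ for positive-mass pieces
  have hfl_nn : ∀ ℓ, p ℓ ≠ 0 → ∀ x, 0 ≤ fℓ ℓ x := by
    intro ℓ hℓ x
    rw [hfℓ ℓ hℓ x]
    exact div_nonneg (Set.indicator_nonneg (fun y _ => hfnn y) x) ENNReal.toReal_nonneg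
  have hfl_meas : ∀ ℓ, p ℓ ≠ 0 → Measurable (fℓ ℓ) := by
    intro ℓ hℓ
    have : fℓ ℓ = fun x => Set.indicator (Y ℓ) f x / (p ℓ).toReal := funext (hfℓ ℓ hℓ)
    rw [this]
    exact (hfm.indicator (hYmeas ℓ)).div_const _
  have hpt_pos : ∀ ℓ, p ℓ ≠ 0 → 0 < (p ℓ).toReal := by
    intro ℓ hℓ; exact ENNReal.toReal_pos hℓ (hp_ne_top ℓ)
  -- Fℓ is a probability measure
  have hFluniv : ∀ ℓ, p ℓ ≠ 0 → Fℓ ℓ Set.univ = 1 := by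
    intro ℓ hℓ
    have hkey : ∀ x, ENNReal.ofReal (fℓ ℓ x) =
        Set.indicator (Y ℓ) (fun z => ENNReal.ofReal (f z)) x * (p ℓ)⁻¹ := by
      intro x
      rw [hfℓ ℓ hℓ x, div_eq_mul_inv,
        ENNReal.ofReal_mul (Set.indicator_nonneg (fun y _ => hfnn y) x),
        ENNReal.ofReal_inv_of_pos (hpt_pos ℓ hℓ), ENNReal.ofReal_toReal (hp_ne_top ℓ)]
      congr 1
      by_cases hx : x ∈ Y ℓ <;> simp [hx]
    rw [hFℓ, withDensity_apply _ MeasurableSet.univ, Measure.restrict_univ]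
    calc ∫⁻ x, ENNReal.ofReal (fℓ ℓ x)
        = ∫⁻ x, Set.indicator (Y ℓ) (fun z => ENNReal.ofReal (f z)) x * (p ℓ)⁻¹ := by
          simp only [hkey]
      _ = (∫⁻ x, Set.indicator (Y ℓ) (fun z => ENNReal.ofReal (f z)) x) * (p ℓ)⁻¹ :=
          lintegral_mul_const' _ _ (by simp [hℓ])
      _ = F (Y ℓ) * (p ℓ)⁻¹ := by
          rw [lintegral_indicator (hYmeas ℓ), hFY ℓ]
      _ = 1 := by rw [← hp ℓ, ENNReal.mul_inv_cancel hℓ (hp_ne_top ℓ)]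
  -- the main per-piece estimate
  have key : ∀ ℓ, ∫⁻ y in Y ℓ, g y ≤
      p ℓ * ∫⁻ y in Y ℓ, D ℓ y ∂(Fℓ ℓ) +
        (d : ℝ≥0∞) * (p ℓ * ENNReal.ofReal (logPlus (2 / r ℓ))) := by
    intro ℓ
    by_cases hℓ : p ℓ = 0
    · -- zero-mass piece: integrand vanishes a.e.
      have h0 : ∫⁻ x in Y ℓ, ENNReal.ofReal (f x) = 0 := by
        rw [← hFY ℓ, ← hp ℓ, hℓ]
      have hae0 : (fun x => ENNReal.ofReal (f x)) =ᶠ[ae (volume.restrict (Y ℓ))] 0 :=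
        (lintegral_eq_zero_iff (hfm.ennreal_ofReal)).1 h0
      have : ∫⁻ y in Y ℓ, g y = 0 := by
        rw [← lintegral_zero (μ := volume.restrict (Y ℓ))]
        refine lintegral_congr_ae ?_
        filter_upwards [hae0] with x hx
        have hfx : f x = 0 := by
          have := hx
          simp only [Pi.zero_apply, ENNReal.ofReal_eq_zero] at this
          exact le_antisymm this (hfnn x)
        simp [hg, hfx]
      rw [this]
      exact zero_le
    · -- positive-mass piece
      obtain ⟨hr, hgeo⟩ := hgeom ℓ hℓ
      have hflm := hfl_meas ℓ hℓ
      have hflnn := hfl_nn ℓ hℓ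
      set cℓ : ℝ≥0∞ := (d : ℝ≥0∞) * ENNReal.ofReal (logPlus (2 / r ℓ)) with hcl
      -- a.e. pointwise bound on logPlus (fℓ y)
      have hae : ∀ᵐ y ∂((Fℓ ℓ).restrict (Y ℓ)),
          ENNReal.ofReal (logPlus (fℓ ℓ y)) ≤ D ℓ y + cℓ := by
        have hres : ∀ᵐ y ∂((Fℓ ℓ).restrict (Y ℓ)), y ∈ Y ℓ →
            (∃ c : Fin d → ℝ, C ℓ y = Set.Icc c (fun i => c i + r ℓ)) ∧ y ∈ C ℓ y ∧
            ∃ a : Fin d → ℝ,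
              Set.Icc a (fun i => a i + r ℓ / 2) ⊆ C ℓ y ∩ {x | 0 < fℓ ℓ x} ∧
              (∀ i, a i = y i ∨ a i + r ℓ / 2 = y i) := ae_restrict_of_ae hgeo
        filter_upwards [hres, ae_restrict_mem (hYmeas ℓ)] with y hy hyY
        obtain ⟨⟨c, hC⟩, hyC, -⟩ := hy hyY
        set I := sInf (fℓ ℓ '' C ℓ y) with hI
        have hbdd : BddBelow (fℓ ℓ '' C ℓ y) :=
          ⟨0, fun t ⟨z, _, hz⟩ => hz ▸ hflnn z⟩
        have hIle : I ≤ fℓ ℓ y := csInf_le hbdd ⟨y, hyC, rfl⟩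
        by_cases hI0 : I ≤ 0
        · rw [hD ℓ y, if_pos hI0]
          exact le_top
        · push_neg at hI0
          rw [hD ℓ y, if_neg (not_le.2 hI0)]
          have hfy : 0 < fℓ ℓ y := lt_of_lt_of_le hI0 hIle
          -- I * r^d ≤ 1 since the cube has measure r^d and Fℓ is a prob. measure
          have hvolC : volume (C ℓ y) = ENNReal.ofReal (r ℓ) ^ d := by
            rw [hC, Real.volume_Icc_pi]
            simp
          have hmC : MeasurableSet (C ℓ y) := hC ▸ measurableSet_Icc
          have h1 : ENNReal.ofReal I * volume (C ℓ y) ≤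
              ∫⁻ z in C ℓ y, ENNReal.ofReal (fℓ ℓ z) := by
            rw [← setLIntegral_const]
            refine setLIntegral_mono' hmC fun z hz => ?_
            exact ENNReal.ofReal_le_ofReal (csInf_le hbdd ⟨z, hz, rfl⟩)
          have h2 : ∫⁻ z in C ℓ y, ENNReal.ofReal (fℓ ℓ z) ≤ 1 := by
            rw [← withDensity_apply _ hmC, ← hFℓ ℓ, ← hFluniv ℓ hℓ]
            exact measure_mono (Set.subset_univ _)
          have h3 : ENNReal.ofReal (I * r ℓ ^ d) ≤ 1 := by
            rw [ENNReal.ofReal_mul hI0.le, ENNReal.ofReal_pow hr.le, ← hvolC]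
            exact h1.trans h2
          have h4 : I * r ℓ ^ d ≤ 1 := ENNReal.ofReal_le_one.1 h3
          have hrd : (0:ℝ) < r ℓ ^ d := pow_pos hr d
          have h5 : I ≤ (r ℓ)⁻¹ ^ d := by
            rw [inv_pow, ← one_div]
            exact (le_div_iff₀ hrd).2 h4
          -- log I ≤ d * logPlus (2/r)
          have hlog1r : Real.log ((r ℓ)⁻¹) ≤ logPlus (2 / r ℓ) := by
            have : Real.log ((r ℓ)⁻¹) ≤ Real.log (2 / r ℓ) := by
              apply Real.log_le_log (by positivity)
              rw [div_eq_mul_inv]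
              nlinarith [inv_pos.2 hr]
            exact this.trans (le_max_left _ _)
          have hlogI : Real.log I ≤ (d : ℝ) * logPlus (2 / r ℓ) := by
            calc Real.log I ≤ Real.log ((r ℓ)⁻¹ ^ d) := Real.log_le_log hI0 h5
              _ = (d : ℝ) * Real.log ((r ℓ)⁻¹) := by rw [Real.log_pow]
              _ ≤ (d : ℝ) * logPlus (2 / r ℓ) := by
                  exact mul_le_mul_of_nonneg_left hlog1r (Nat.cast_nonneg d)
          have hlogsplit : Real.log (fℓ ℓ y) =
              Real.log (fℓ ℓ y / I) + Real.log I := by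
            rw [Real.log_div hfy.ne' hI0.ne']; ring
          have hdivnn : 0 ≤ Real.log (fℓ ℓ y / I) :=
            Real.log_nonneg ((one_le_div hI0).2 hIle)
          have hfinal : logPlus (fℓ ℓ y) ≤
              Real.log (fℓ ℓ y / I) + (d : ℝ) * logPlus (2 / r ℓ) := by
            apply max_le
            · rw [hlogsplit]; linarith
            · have : (0:ℝ) ≤ (d : ℝ) * logPlus (2 / r ℓ) := by
                apply mul_nonneg (Nat.cast_nonneg d) (le_max_right _ _)
              linarith
          calc ENNReal.ofReal (logPlus (fℓ ℓ y))
              ≤ ENNReal.ofReal (Real.log (fℓ ℓ y / I) + (d : ℝ) * logPlus (2 / r ℓ)) :=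
                ENNReal.ofReal_le_ofReal hfinal
            _ ≤ ENNReal.ofReal (Real.log (fℓ ℓ y / I)) +
                ENNReal.ofReal ((d : ℝ) * logPlus (2 / r ℓ)) := ENNReal.ofReal_add_le
            _ = ENNReal.ofReal (Real.log (fℓ ℓ y / I)) + cℓ := by
                rw [hcl, ENNReal.ofReal_mul (Nat.cast_nonneg d), ENNReal.ofReal_natCast]
      -- integrate the pointwise bound w.r.t. Fℓ
      have hint1 : ∫⁻ y in Y ℓ, ENNReal.ofReal (logPlus (fℓ ℓ y)) ∂(Fℓ ℓ) ≤
          (∫⁻ y in Y ℓ, D ℓ y ∂(Fℓ ℓ)) + cℓ := by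
        calc ∫⁻ y in Y ℓ, ENNReal.ofReal (logPlus (fℓ ℓ y)) ∂(Fℓ ℓ)
            ≤ ∫⁻ y in Y ℓ, (D ℓ y + cℓ) ∂(Fℓ ℓ) := lintegral_mono_ae hae
          _ = (∫⁻ y in Y ℓ, D ℓ y ∂(Fℓ ℓ)) + cℓ * (Fℓ ℓ) (Y ℓ) := by
              rw [lintegral_add_right _ measurable_const, setLIntegral_const]
          _ ≤ (∫⁻ y in Y ℓ, D ℓ y ∂(Fℓ ℓ)) + cℓ * 1 := by
              gcongr
              rw [← hFluniv ℓ hℓ]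
              exact measure_mono (Set.subset_univ _)
          _ = (∫⁻ y in Y ℓ, D ℓ y ∂(Fℓ ℓ)) + cℓ := by rw [mul_one]
      -- change of variables to the volume integral
      have hcov : ∫⁻ y in Y ℓ, ENNReal.ofReal (fℓ ℓ y * logPlus (fℓ ℓ y)) =
          ∫⁻ y in Y ℓ, ENNReal.ofReal (logPlus (fℓ ℓ y)) ∂(Fℓ ℓ) := by
        rw [hFℓ ℓ, restrict_withDensity (hYmeas ℓ),
          lintegral_withDensity_eq_lintegral_mul _ hflm.ennreal_ofReal
            (Measurable.ennreal_ofReal (by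
              exact (Real.measurable_log.comp hflm).max measurable_const))]
        refine lintegral_congr fun x => ?_
        simp only [Pi.mul_apply]
        rw [← ENNReal.ofReal_mul (hflnn x)]
      -- pointwise bound relating g to fℓ
      have hpw : ∀ y ∈ Y ℓ, g y ≤ p ℓ * ENNReal.ofReal (fℓ ℓ y * logPlus (fℓ ℓ y)) := by
        intro y hy
        have hfy : f y = (p ℓ).toReal * fℓ ℓ y := by
          rw [hfℓ ℓ hℓ y, Set.indicator_of_mem hy]
          field_simp
          rw [mul_div_cancel_right₀ _ (hpt_pos ℓ hℓ).ne']
        have hptle : (p ℓ).toReal ≤ 1 := by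
          rw [← ENNReal.toReal_one]
          exact ENNReal.toReal_mono ENNReal.one_ne_top (hp_le ℓ)
        have hLP : logPlus ((p ℓ).toReal * fℓ ℓ y) ≤ logPlus (fℓ ℓ y) := by
          have hle : (p ℓ).toReal * fℓ ℓ y ≤ fℓ ℓ y := by
            nlinarith [hflnn y]
          rcases eq_or_lt_of_le (mul_nonneg ENNReal.toReal_nonneg (hflnn y)) with h | h
          · rw [← h]; simp [logPlus, Real.log_zero]
          · exact max_le_max (Real.log_le_log h hle) le_rfl
        calc g y = ENNReal.ofReal ((p ℓ).toReal * fℓ ℓ y * logPlus ((p ℓ).toReal * fℓ ℓ y)) := by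
              rw [hg]; simp only []; rw [hfy]
          _ ≤ ENNReal.ofReal ((p ℓ).toReal * (fℓ ℓ y * logPlus (fℓ ℓ y))) := by
              apply ENNReal.ofReal_le_ofReal
              have h1 : (p ℓ).toReal * fℓ ℓ y * logPlus ((p ℓ).toReal * fℓ ℓ y) ≤
                  (p ℓ).toReal * fℓ ℓ y * logPlus (fℓ ℓ y) := by
                apply mul_le_mul_of_nonneg_left hLP
                exact mul_nonneg ENNReal.toReal_nonneg (hflnn y)
              linarith [h1]
          _ = p ℓ * ENNReal.ofReal (fℓ ℓ y * logPlus (fℓ ℓ y)) := by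
              rw [ENNReal.ofReal_mul ENNReal.toReal_nonneg,
                ENNReal.ofReal_toReal (hp_ne_top ℓ)]
      calc ∫⁻ y in Y ℓ, g y
          ≤ ∫⁻ y in Y ℓ, p ℓ * ENNReal.ofReal (fℓ ℓ y * logPlus (fℓ ℓ y)) :=
            setLIntegral_mono' (hYmeas ℓ) hpw
        _ = p ℓ * ∫⁻ y in Y ℓ, ENNReal.ofReal (fℓ ℓ y * logPlus (fℓ ℓ y)) :=
            lintegral_const_mul' _ _ (hp_ne_top ℓ)
        _ = p ℓ * ∫⁻ y in Y ℓ, ENNReal.ofReal (logPlus (fℓ ℓ y)) ∂(Fℓ ℓ) := by rw [hcov]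
        _ ≤ p ℓ * ((∫⁻ y in Y ℓ, D ℓ y ∂(Fℓ ℓ)) + cℓ) := by gcongr
        _ = p ℓ * ∫⁻ y in Y ℓ, D ℓ y ∂(Fℓ ℓ) + p ℓ * cℓ := mul_add _ _ _
        _ = p ℓ * ∫⁻ y in Y ℓ, D ℓ y ∂(Fℓ ℓ) +
            (d : ℝ≥0∞) * (p ℓ * ENNReal.ofReal (logPlus (2 / r ℓ))) := by
              rw [hcl]; ring
  -- decompose the total integral along the partition
  have hsupp : MeasurableSet {x | 0 < f x} := measurableSet_lt measurable_const hfm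
  have hsplit : ∫⁻ y, g y = ∑' ℓ, ∫⁻ y in Y ℓ, g y := by
    have h1 : ∫⁻ y, g y = ∫⁻ y in ⋃ ℓ, Y ℓ, g y := by
      rw [hYunion]
      rw [← lintegral_add_compl g hsupp]
      have h0 : ∫⁻ y in {x | 0 < f x}ᶜ, g y = 0 := by
        have : ∀ᵐ y ∂(volume.restrict {x | 0 < f x}ᶜ), g y = 0 := by
          filter_upwards [ae_restrict_mem hsupp.compl] with y hy
          have : f y = 0 := le_antisymm (not_lt.1 hy) (hfnn y)
          simp [hg, this]
        calc ∫⁻ y in {x | 0 < f x}ᶜ, g y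
            = ∫⁻ y in {x | 0 < f x}ᶜ, 0 := lintegral_congr_ae this
          _ = 0 := lintegral_zero
      rw [h0, add_zero]
    rw [h1, lintegral_iUnion hYmeas hYdisj]
  have hmain : ∫⁻ y, g y ≤
      (∑' ℓ, p ℓ * ∫⁻ y in Y ℓ, D ℓ y ∂(Fℓ ℓ)) +
        (d : ℝ≥0∞) * ∑' ℓ, p ℓ * ENNReal.ofReal (logPlus (2 / r ℓ)) := by
    rw [hsplit]
    calc ∑' ℓ, ∫⁻ y in Y ℓ, g y
        ≤ ∑' ℓ, (p ℓ * ∫⁻ y in Y ℓ, D ℓ y ∂(Fℓ ℓ) +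
            (d : ℝ≥0∞) * (p ℓ * ENNReal.ofReal (logPlus (2 / r ℓ)))) :=
          ENNReal.tsum_le_tsum key
      _ = (∑' ℓ, p ℓ * ∫⁻ y in Y ℓ, D ℓ y ∂(Fℓ ℓ)) +
          ∑' ℓ, (d : ℝ≥0∞) * (p ℓ * ENNReal.ofReal (logPlus (2 / r ℓ))) := ENNReal.tsum_add
      _ = (∑' ℓ, p ℓ * ∫⁻ y in Y ℓ, D ℓ y ∂(Fℓ ℓ)) +
          (d : ℝ≥0∞) * ∑' ℓ, p ℓ * ENNReal.ofReal (logPlus (2 / r ℓ)) := by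
            rw [ENNReal.tsum_mul_left]
  refine ⟨hmain, lt_of_le_of_lt hmain ?_⟩
  -- finiteness of the RHS
  have hpsum : ∑' ℓ, p ℓ ≤ 1 := by
    have : ∑' ℓ, p ℓ = F (⋃ ℓ, Y ℓ) := by
      rw [measure_iUnion hYdisj hYmeas]
      exact tsum_congr hp
    rw [this, ← hFuniv]
    exact measure_mono (Set.subset_univ _)
  have hB : ∑' ℓ, p ℓ * ENNReal.ofReal (logPlus (2 / r ℓ)) ≤
      ENNReal.ofReal (Real.log 2) + ∑' ℓ, p ℓ * ENNReal.ofReal (logPlus (1 / r ℓ)) := by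
    calc ∑' ℓ, p ℓ * ENNReal.ofReal (logPlus (2 / r ℓ))
        ≤ ∑' ℓ, (p ℓ * ENNReal.ofReal (Real.log 2) +
            p ℓ * ENNReal.ofReal (logPlus (1 / r ℓ))) := by
          apply ENNReal.tsum_le_tsum
          intro ℓ
          by_cases hℓ : p ℓ = 0
          · simp [hℓ]
          · have hr := (hgeom ℓ hℓ).1
            have hlog : logPlus (2 / r ℓ) ≤ Real.log 2 + logPlus (1 / r ℓ) := by
              have h2r : Real.log (2 / r ℓ) = Real.log 2 + Real.log (1 / r ℓ) := by
                rw [Real.log_div two_ne_zero hr.ne', Real.log_div one_ne_zero hr.ne',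
                  Real.log_one]
                ring
              apply max_le
              · rw [h2r]
                have : Real.log (1 / r ℓ) ≤ logPlus (1 / r ℓ) := le_max_left _ _
                linarith
              · have h2 : (0:ℝ) ≤ Real.log 2 := Real.log_nonneg one_le_two
                have h3 : (0:ℝ) ≤ logPlus (1 / r ℓ) := le_max_right _ _
                linarith
            calc p ℓ * ENNReal.ofReal (logPlus (2 / r ℓ))
                ≤ p ℓ * ENNReal.ofReal (Real.log 2 + logPlus (1 / r ℓ)) :=
                  mul_le_mul_right (ENNReal.ofReal_le_ofReal hlog) _
              _ ≤ p ℓ * (ENNReal.ofReal (Real.log 2) +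
                  ENNReal.ofReal (logPlus (1 / r ℓ))) :=
                  mul_le_mul_right ENNReal.ofReal_add_le _
              _ = p ℓ * ENNReal.ofReal (Real.log 2) +
                  p ℓ * ENNReal.ofReal (logPlus (1 / r ℓ)) := mul_add _ _ _
      _ = (∑' ℓ, p ℓ * ENNReal.ofReal (Real.log 2)) +
          ∑' ℓ, p ℓ * ENNReal.ofReal (logPlus (1 / r ℓ)) := ENNReal.tsum_add
      _ ≤ ENNReal.ofReal (Real.log 2) + ∑' ℓ, p ℓ * ENNReal.ofReal (logPlus (1 / r ℓ)) := by
          gcongr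
          calc ∑' ℓ, p ℓ * ENNReal.ofReal (Real.log 2)
              = (∑' ℓ, p ℓ) * ENNReal.ofReal (Real.log 2) := ENNReal.tsum_mul_right
            _ ≤ 1 * ENNReal.ofReal (Real.log 2) := by gcongr
            _ = ENNReal.ofReal (Real.log 2) := one_mul _
  have hBfin : ∑' ℓ, p ℓ * ENNReal.ofReal (logPlus (2 / r ℓ)) < ⊤ :=
    lt_of_le_of_lt hB (ENNReal.add_lt_top.2 ⟨ENNReal.ofReal_lt_top, hrsum⟩)
  exact ENNReal.add_lt_top.2 ⟨hDsum, ENNReal.mul_lt_top (ENNReal.natCast_lt_top d) hBfin⟩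
end

section
/- For n ≥ 2 let w_n = e^{-n⁴} and N_n = ⌈e^{n⁴}/(32 n⁴)⌉; for 0 ≤ k < N_n let c_{n,k} = n + (4k+2) w_n and ψ_{n,k}(x) = max{1 − |x − c_{n,k}|/w_n, 0}; let h_n = Σ_{k=0}^{N_n−1} ψ_{n,k}, ν(x) = e^{-x⁴} + Σ_{n=2}^∞ h_n(x), and Z = ∫_ℝ ν. Then: the intervals I_n = [n, n + 4 N_n w_n] satisfy I_n ⊆ [n, n + 1/4] and are pairwise disjoint; 0 < Z < ∞; ν is continuous with 0 < ν(x) ≤ 2 for all x ∈ ℝ; and f = ν/Z is a continuous, strictly positive, bounded probability density on ℝ with ∫_ℝ x² f(x) dx < ∞ and ∫_ℝ f(x) log_+ f(x) dx < ∞. -/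
open MeasureTheory Matrix
open scoped ENNReal NNReal BigOperators

/-- `w_n = e^{-n⁴}`. -/
noncomputable def wSeq (n : ℕ) : ℝ := Real.exp (-(n : ℝ) ^ 4)

/-- `N_n = ⌈e^{n⁴} / (32 n⁴)⌉`. -/
noncomputable def NSeq (n : ℕ) : ℕ := ⌈Real.exp ((n : ℝ) ^ 4) / (32 * (n : ℝ) ^ 4)⌉₊

/-- The tent centers `c_{n,k} = n + (4k+2) w_n`. -/
noncomputable def cSeq (n k : ℕ) : ℝ := (n : ℝ) + (4 * (k : ℝ) + 2) * wSeq n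

/-- The tent function `ψ_{n,k}(x) = max (1 - |x - c_{n,k}| / w_n) 0`. -/
noncomputable def psiSeq (n k : ℕ) (x : ℝ) : ℝ := max (1 - |x - cSeq n k| / wSeq n) 0

/-- `h_n = Σ_{k=0}^{N_n - 1} ψ_{n,k}`. -/
noncomputable def hSeq (n : ℕ) (x : ℝ) : ℝ := ∑ k ∈ Finset.range (NSeq n), psiSeq n k x

/-- `ν(x) = e^{-x⁴} + Σ_{n≥2} h_n(x)`. -/
noncomputable def nuFun (x : ℝ) : ℝ :=
  Real.exp (-x ^ 4) + ∑' n : ℕ, if 2 ≤ n then hSeq n x else 0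

/-- `I_n = [n, n + 4 N_n w_n]`. -/
noncomputable def ISeq (n : ℕ) : Set ℝ :=
  Set.Icc (n : ℝ) ((n : ℝ) + 4 * (NSeq n : ℝ) * wSeq n)

lemma wSeq_pos (n : ℕ) : 0 < wSeq n := Real.exp_pos _

lemma psiSeq_nonneg (n k : ℕ) (x : ℝ) : 0 ≤ psiSeq n k x := le_max_right _ _

lemma psiSeq_le_one (n k : ℕ) (x : ℝ) : psiSeq n k x ≤ 1 := by
  apply max_le _ zero_le_one
  have : 0 ≤ |x - cSeq n k| / wSeq n := div_nonneg (abs_nonneg _) (wSeq_pos n).le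
  linarith

lemma psiSeq_continuous (n k : ℕ) : Continuous (psiSeq n k) := by
  unfold psiSeq
  fun_prop

lemma hSeq_continuous (n : ℕ) : Continuous (hSeq n) := by
  unfold hSeq
  exact continuous_finset_sum _ fun k _ => psiSeq_continuous n k

lemma hSeq_nonneg (n : ℕ) (x : ℝ) : 0 ≤ hSeq n x :=
  Finset.sum_nonneg fun k _ => psiSeq_nonneg n k x

lemma psiSeq_ne_zero {n k : ℕ} {x : ℝ} (h : psiSeq n k x ≠ 0) : |x - cSeq n k| < wSeq n := by
  by_contra hc
  push_neg at hc
  apply h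
  unfold psiSeq
  rw [max_eq_right]
  have := (wSeq_pos n)
  rw [sub_nonpos]
  rw [le_div_iff₀ this]
  linarith

lemma exp_ge (t : ℝ) (ht : 16 ≤ t) : 32 * t ≤ Real.exp t := by
  have h1 : Real.exp (t/2) ≥ 256 := by
    have : Real.exp (t/2) ≥ Real.exp 8 := Real.exp_le_exp.2 (by linarith)
    have h8 : (256 : ℝ) ≤ Real.exp 8 := by
      have : Real.exp 8 = Real.exp 1 ^ 8 := by
        rw [← Real.exp_nat_mul]; norm_num
      rw [this]
      calc (256:ℝ) = 2 ^ 8 := by norm_num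
      _ ≤ Real.exp 1 ^ 8 := by
        apply pow_le_pow_left₀ (by norm_num)
        have := Real.add_one_le_exp 1
        linarith
    linarith
  have h2 : t / 2 ≤ Real.exp (t/2) := by
    have := Real.add_one_le_exp (t/2)
    linarith
  have : Real.exp t = Real.exp (t/2) * Real.exp (t/2) := by
    rw [← Real.exp_add]; ring_nf
  rw [this]
  nlinarith [Real.exp_pos (t/2)]

lemma Nw_le {n : ℕ} (hn : 2 ≤ n) : (NSeq n : ℝ) * wSeq n ≤ 1 / (16 * (n:ℝ)^4) := by
  set t : ℝ := (n:ℝ)^4 with hdef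
  have hn2 : (2:ℝ) ≤ (n:ℝ) := by exact_mod_cast hn
  have ht : 16 ≤ t := by
    calc (16:ℝ) = 2^4 := by norm_num
    _ ≤ (n:ℝ)^4 := by apply pow_le_pow_left₀ (by norm_num) hn2
  have htpos : 0 < t := by linarith
  have hN : (NSeq n : ℝ) ≤ Real.exp t / (32 * t) + 1 := by
    have := Nat.ceil_lt_add_one (R := ℝ)
      (a := Real.exp ((n:ℝ)^4) / (32 * (n:ℝ)^4))
      (by positivity)
    rw [NSeq]
    exact le_of_lt (by rw [← hdef] at this ⊢; exact this)
  have hw : wSeq n = Real.exp (-t) := rfl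
  have hexp : 32 * t ≤ Real.exp t := exp_ge t ht
  have hwle : Real.exp (-t) ≤ 1 / (32 * t) := by
    rw [Real.exp_neg, inv_eq_one_div]
    apply div_le_div_of_nonneg_left one_pos.le (by positivity) hexp
  have hwpos : 0 < Real.exp (-t) := Real.exp_pos _
  calc (NSeq n : ℝ) * wSeq n ≤ (Real.exp t / (32 * t) + 1) * Real.exp (-t) := by
        apply mul_le_mul_of_nonneg_right hN hwpos.le
  _ = Real.exp t * Real.exp (-t) / (32 * t) + Real.exp (-t) := by
        rw [add_mul, one_mul]; ring
  _ = 1 / (32 * t) + Real.exp (-t) := by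
        rw [← Real.exp_add]; simp
  _ ≤ 1 / (32 * t) + 1 / (32 * t) := by linarith
  _ = 1 / (16 * t) := by field_simp; ring

lemma fourNw_le {n : ℕ} (hn : 2 ≤ n) : 4 * (NSeq n : ℝ) * wSeq n ≤ 1 / 4 := by
  have h := Nw_le hn
  have hn2 : (2:ℝ) ≤ (n:ℝ) := by exact_mod_cast hn
  have ht : (16:ℝ) ≤ (n:ℝ)^4 := by
    calc (16:ℝ) = 2^4 := by norm_num
    _ ≤ (n:ℝ)^4 := by apply pow_le_pow_left₀ (by norm_num) hn2
  have h2 : 1 / (16 * (n:ℝ)^4) ≤ 1 / (16 * 16) := by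
    apply div_le_div_of_nonneg_left one_pos.le (by norm_num) (by linarith)
  calc 4 * (NSeq n : ℝ) * wSeq n = 4 * ((NSeq n : ℝ) * wSeq n) := by ring
  _ ≤ 4 * (1 / (16 * 16)) := by
      have := le_trans h h2
      linarith [mul_nonneg (Nat.cast_nonneg (NSeq n) : (0:ℝ) ≤ NSeq n) (wSeq_pos n).le]
  _ ≤ 1 / 4 := by norm_num

lemma hSeq_eq_zero_left {n : ℕ} {x : ℝ} (hx : x ≤ (n:ℝ)) : hSeq n x = 0 := by
  apply Finset.sum_eq_zero
  intro k _
  by_contra h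
  have h1 := psiSeq_ne_zero h
  have hw := wSeq_pos n
  have hc : cSeq n k = (n:ℝ) + (4 * (k:ℝ) + 2) * wSeq n := rfl
  have habs := abs_lt.1 h1
  have hk0 : (0:ℝ) ≤ (k:ℝ) := Nat.cast_nonneg k
  nlinarith [habs.1]

lemma hSeq_eq_zero_right {n : ℕ} {x : ℝ} (hn : 2 ≤ n) (hx : (n:ℝ) + 1/4 ≤ x) :
    hSeq n x = 0 := by
  apply Finset.sum_eq_zero
  intro k hk
  by_contra h
  have h1 := psiSeq_ne_zero h
  have hw := wSeq_pos n
  have hc : cSeq n k = (n:ℝ) + (4 * (k:ℝ) + 2) * wSeq n := rfl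
  have habs := abs_lt.1 h1
  have hkN : (k:ℝ) + 1 ≤ (NSeq n : ℝ) := by
    exact_mod_cast Finset.mem_range.1 hk
  have h4 := fourNw_le hn
  -- x < c + w = n + (4k+3) w ≤ n + 4 N w ≤ n + 1/4
  have : x < (n:ℝ) + (4 * (k:ℝ) + 3) * wSeq n := by nlinarith [habs.2]
  nlinarith

lemma psiSeq_unique {n k k' : ℕ} {x : ℝ} (h : psiSeq n k x ≠ 0) (h' : psiSeq n k' x ≠ 0) :
    k = k' := by
  have h1 := abs_lt.1 (psiSeq_ne_zero h)
  have h2 := abs_lt.1 (psiSeq_ne_zero h')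
  have hw := wSeq_pos n
  have hc : cSeq n k = (n:ℝ) + (4 * (k:ℝ) + 2) * wSeq n := rfl
  have hc' : cSeq n k' = (n:ℝ) + (4 * (k':ℝ) + 2) * wSeq n := rfl
  have hlt : (k:ℝ) < (k':ℝ) + 1 := by nlinarith
  have hlt' : (k':ℝ) < (k:ℝ) + 1 := by nlinarith
  have : k < k' + 1 := by exact_mod_cast hlt
  have : k' < k + 1 := by exact_mod_cast hlt'
  omega

lemma hSeq_le_one (n : ℕ) (x : ℝ) : hSeq n x ≤ 1 := by
  by_cases h : ∀ k ∈ Finset.range (NSeq n), psiSeq n k x = 0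
  · rw [hSeq, Finset.sum_eq_zero h]; norm_num
  · push_neg at h
    obtain ⟨k₀, hk₀, hne⟩ := h
    rw [hSeq, Finset.sum_eq_single_of_mem k₀ hk₀ ?_]
    · exact psiSeq_le_one n k₀ x
    intro k _ hkne
    by_contra hzz
    exact hkne (psiSeq_unique hzz hne)

/-- The summand in the definition of `nuFun`. -/
noncomputable def GFun (n : ℕ) (x : ℝ) : ℝ := if 2 ≤ n then hSeq n x else 0

lemma GFun_nonneg (n : ℕ) (x : ℝ) : 0 ≤ GFun n x := by
  unfold GFun; split <;> simp [hSeq_nonneg]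

lemma GFun_le_one (n : ℕ) (x : ℝ) : GFun n x ≤ 1 := by
  unfold GFun; split
  · exact hSeq_le_one n x
  · norm_num

lemma GFun_continuous (n : ℕ) : Continuous (GFun n) := by
  unfold GFun; split
  · exact hSeq_continuous n
  · exact continuous_const

lemma GFun_ne_zero {n : ℕ} {x : ℝ} (h : GFun n x ≠ 0) :
    2 ≤ n ∧ (n:ℝ) < x ∧ x < (n:ℝ) + 1/4 := by
  unfold GFun at h
  split at h
  · rename_i hn
    refine ⟨hn, ?_, ?_⟩
    · by_contra hc; push_neg at hc; exact h (hSeq_eq_zero_left hc)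
    · by_contra hc; push_neg at hc; exact h (hSeq_eq_zero_right hn hc)
  · exact absurd rfl h

lemma GFun_unique {m n : ℕ} {x : ℝ} (h : GFun m x ≠ 0) (h' : GFun n x ≠ 0) : m = n := by
  obtain ⟨_, h1, h2⟩ := GFun_ne_zero h
  obtain ⟨_, h3, h4⟩ := GFun_ne_zero h'
  have : (m:ℝ) < (n:ℝ) + 1 := by linarith
  have hmn : m < n + 1 := by exact_mod_cast this
  have : (n:ℝ) < (m:ℝ) + 1 := by linarith
  have hnm : n < m + 1 := by exact_mod_cast this
  omega

lemma GFun_eventually_zero {x y : ℝ} (hy : |y - x| < 1) {n : ℕ}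
    (hn : ⌈x⌉₊ + 2 ≤ n) : GFun n y = 0 := by
  by_contra h
  obtain ⟨_, h1, _⟩ := GFun_ne_zero h
  have hceil : x ≤ (⌈x⌉₊ : ℝ) := Nat.le_ceil x
  have hcast : ((⌈x⌉₊ + 2 : ℕ) : ℝ) ≤ (n:ℝ) := by exact_mod_cast hn
  push_cast at hcast
  have := abs_lt.1 hy
  linarith

noncomputable def TFun (x : ℝ) : ℝ := ∑' n, GFun n x

lemma TFun_eq_sum {x : ℝ} :
    Set.EqOn TFun (fun y => ∑ n ∈ Finset.range (⌈x⌉₊ + 2), GFun n y) (Metric.ball x 1) := by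
  intro y hy
  rw [Metric.mem_ball, Real.dist_eq] at hy
  exact tsum_eq_sum fun n hn => GFun_eventually_zero hy (Nat.le_of_not_lt (Finset.mem_range.not.mp hn))

lemma GFun_summable (x : ℝ) : Summable (fun n => GFun n x) :=
  summable_of_ne_finset_zero (s := Finset.range (⌈x⌉₊ + 2)) fun n hn =>
    GFun_eventually_zero (by simp) (Nat.le_of_not_lt (Finset.mem_range.not.mp hn))

lemma TFun_nonneg (x : ℝ) : 0 ≤ TFun x := tsum_nonneg fun n => GFun_nonneg n x

lemma TFun_continuous : Continuous TFun := by
  rw [continuous_iff_continuousAt]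
  intro x
  have hmem : Metric.ball x 1 ∈ nhds x := Metric.ball_mem_nhds x one_pos
  apply ContinuousAt.congr _ (Filter.eventuallyEq_of_mem hmem fun y hy => (TFun_eq_sum hy).symm)
  exact (continuous_finset_sum _ fun n _ => GFun_continuous n).continuousAt

lemma TFun_le_one (x : ℝ) : TFun x ≤ 1 := by
  have hx : x ∈ Metric.ball x 1 := Metric.mem_ball_self one_pos
  rw [show TFun x = ∑ n ∈ Finset.range (⌈x⌉₊ + 2), GFun n x from TFun_eq_sum hx]
  by_cases h : ∀ n ∈ Finset.range (⌈x⌉₊ + 2), GFun n x = 0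
  · rw [Finset.sum_eq_zero h]; norm_num
  · push_neg at h
    obtain ⟨n₀, hn₀, hne⟩ := h
    rw [Finset.sum_eq_single_of_mem n₀ hn₀ ?_]
    · exact GFun_le_one n₀ x
    intro n _ hkne
    by_contra hzz
    exact hkne (GFun_unique hzz hne)

lemma nuFun_eq (x : ℝ) : nuFun x = Real.exp (-x ^ 4) + TFun x := rfl

lemma nuFun_pos (x : ℝ) : 0 < nuFun x := by
  rw [nuFun_eq]
  have := TFun_nonneg x
  have := Real.exp_pos (-x ^ 4)
  linarith

lemma nuFun_le_two (x : ℝ) : nuFun x ≤ 2 := by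
  rw [nuFun_eq]
  have h1 : Real.exp (-x ^ 4) ≤ 1 := Real.exp_le_one_iff.2 (neg_nonpos.2 (by positivity))
  have := TFun_le_one x
  linarith

lemma nuFun_continuous : Continuous nuFun := by
  have : nuFun = fun x => Real.exp (-x ^ 4) + TFun x := funext nuFun_eq
  rw [this]
  exact ((Real.continuous_exp.comp (by fun_prop)).add TFun_continuous)

open ENNReal in
lemma lint_psi (n k : ℕ) :
    ∫⁻ x : ℝ, ENNReal.ofReal (psiSeq n k x) ≤ ENNReal.ofReal (2 * wSeq n) := by
  have hw := wSeq_pos n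
  set c := cSeq n k
  have hb : ∀ x : ℝ, ENNReal.ofReal (psiSeq n k x)
      ≤ Set.indicator (Set.Icc (c - wSeq n) (c + wSeq n)) (fun _ => (1 : ℝ≥0∞)) x := by
    intro x
    by_cases hx : x ∈ Set.Icc (c - wSeq n) (c + wSeq n)
    · rw [Set.indicator_of_mem hx]
      exact ENNReal.ofReal_le_one.2 (psiSeq_le_one n k x)
    · rw [Set.indicator_of_notMem hx]
      have : psiSeq n k x = 0 := by
        by_contra h
        have := abs_lt.1 (psiSeq_ne_zero h)
        apply hx
        constructor <;> [skip; skip] <;> linarith [this.1, this.2]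
      simp [this]
  calc ∫⁻ x : ℝ, ENNReal.ofReal (psiSeq n k x)
      ≤ ∫⁻ x : ℝ, Set.indicator (Set.Icc (c - wSeq n) (c + wSeq n)) (fun _ => (1 : ℝ≥0∞)) x :=
        lintegral_mono hb
  _ = volume (Set.Icc (c - wSeq n) (c + wSeq n)) := by
        rw [lintegral_indicator measurableSet_Icc]
        simp
  _ = ENNReal.ofReal (2 * wSeq n) := by
        rw [Real.volume_Icc]
        congr 1
        ring

lemma lint_h {n : ℕ} (hn : 2 ≤ n) :
    ∫⁻ x : ℝ, ENNReal.ofReal (hSeq n x) ≤ ENNReal.ofReal (1 / (8 * (n:ℝ)^4)) := by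
  have hw := wSeq_pos n
  have h1 : ∀ x : ℝ, ENNReal.ofReal (hSeq n x)
      = ∑ k ∈ Finset.range (NSeq n), ENNReal.ofReal (psiSeq n k x) := by
    intro x
    rw [hSeq, ENNReal.ofReal_sum_of_nonneg fun k _ => psiSeq_nonneg n k x]
  calc ∫⁻ x : ℝ, ENNReal.ofReal (hSeq n x)
      = ∑ k ∈ Finset.range (NSeq n), ∫⁻ x : ℝ, ENNReal.ofReal (psiSeq n k x) := by
        simp_rw [h1]
        exact lintegral_finset_sum _ fun k _ =>
          ((psiSeq_continuous n k).measurable.ennreal_ofReal)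
  _ ≤ ∑ _k ∈ Finset.range (NSeq n), ENNReal.ofReal (2 * wSeq n) :=
        Finset.sum_le_sum fun k _ => lint_psi n k
  _ = (NSeq n : ℝ≥0∞) * ENNReal.ofReal (2 * wSeq n) := by
        rw [Finset.sum_const, Finset.card_range, nsmul_eq_mul]
  _ = ENNReal.ofReal ((NSeq n : ℝ) * (2 * wSeq n)) := by
        rw [ENNReal.ofReal_mul (Nat.cast_nonneg _), ENNReal.ofReal_natCast]
  _ ≤ ENNReal.ofReal (1 / (8 * (n:ℝ)^4)) := by
        apply ENNReal.ofReal_le_ofReal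
        have := Nw_le hn
        have hnp : (0:ℝ) < (n:ℝ)^4 := by positivity
        calc (NSeq n : ℝ) * (2 * wSeq n) = 2 * ((NSeq n : ℝ) * wSeq n) := by ring
        _ ≤ 2 * (1 / (16 * (n:ℝ)^4)) := by linarith
        _ = 1 / (8 * (n:ℝ)^4) := by field_simp; ring

lemma integrable_poly_exp : Integrable (fun x : ℝ => (1 + x ^ 2) * Real.exp (-x ^ 4)) := by
  have h1 : Integrable (fun x : ℝ => Real.exp (-x ^ 2)) := by
    have := integrable_exp_neg_mul_sq (b := 1) one_pos
    simpa using this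
  have h2 : Integrable (fun x : ℝ => x ^ 2 * Real.exp (-x ^ 2)) := by
    have h := integrable_rpow_mul_exp_neg_mul_sq (b := 1) one_pos (s := 2) (by norm_num)
    refine h.congr (Filter.Eventually.of_forall fun x => ?_)
    dsimp only
    rw [show ((2:ℝ) = ((2:ℕ):ℝ)) by norm_num, Real.rpow_natCast]
    norm_num
  have hg : Integrable (fun x : ℝ =>
      Real.exp 1 * (Real.exp (-x ^ 2) + x ^ 2 * Real.exp (-x ^ 2))) :=
    (h1.add h2).const_mul _
  apply hg.mono' ((continuous_const.add (continuous_pow 2)).mul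
    (Real.continuous_exp.comp (continuous_pow 4).neg)).aestronglyMeasurable
  filter_upwards with x
  have hb : Real.exp (-x ^ 4) ≤ Real.exp 1 * Real.exp (-x ^ 2) := by
    rw [← Real.exp_add]
    apply Real.exp_le_exp.2
    nlinarith [sq_nonneg (x ^ 2 - 1)]
  have h0 : (0:ℝ) ≤ 1 + x ^ 2 := by positivity
  show ‖(1 + x ^ 2) * Real.exp (-x ^ 4)‖ ≤ Real.exp 1 * (Real.exp (-x ^ 2) + x ^ 2 * Real.exp (-x ^ 2))
  rw [Real.norm_eq_abs, abs_of_nonneg (show (0:ℝ) ≤ (1 + x ^ 2) * Real.exp (-x ^ 4) by positivity)]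
  calc (1 + x ^ 2) * Real.exp (-x ^ 4) ≤ (1 + x ^ 2) * (Real.exp 1 * Real.exp (-x ^ 2)) :=
        mul_le_mul_of_nonneg_left hb h0
  _ = Real.exp 1 * (Real.exp (-x ^ 2) + x ^ 2 * Real.exp (-x ^ 2)) := by ring

lemma lint_G (n : ℕ) :
    ∫⁻ x : ℝ, ENNReal.ofReal ((1 + x ^ 2) * GFun n x) ≤ ENNReal.ofReal (((n:ℝ) ^ 2)⁻¹) := by
  by_cases hn : 2 ≤ n
  · have hG : ∀ x, GFun n x = hSeq n x := fun x => if_pos hn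
    set B : ℝ := 1 + ((n:ℝ) + 1) ^ 2 with hB
    have hBpos : 0 ≤ B := by positivity
    have hn2 : (2:ℝ) ≤ (n:ℝ) := by exact_mod_cast hn
    have hpt : ∀ x : ℝ, (1 + x ^ 2) * GFun n x ≤ B * hSeq n x := by
      intro x
      rw [hG]
      by_cases hx : hSeq n x = 0
      · rw [hx]; simp
      · have h1 : ¬ (x ≤ (n:ℝ)) := fun hc => hx (hSeq_eq_zero_left hc)
        have h2 : ¬ ((n:ℝ) + 1/4 ≤ x) := fun hc => hx (hSeq_eq_zero_right hn hc)
        push_neg at h1 h2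
        have hxsq : 1 + x ^ 2 ≤ B := by nlinarith
        exact mul_le_mul_of_nonneg_right hxsq (hSeq_nonneg n x)
    calc ∫⁻ x : ℝ, ENNReal.ofReal ((1 + x ^ 2) * GFun n x)
        ≤ ∫⁻ x : ℝ, ENNReal.ofReal (B * hSeq n x) :=
          lintegral_mono fun x => ENNReal.ofReal_le_ofReal (hpt x)
    _ = ENNReal.ofReal B * ∫⁻ x : ℝ, ENNReal.ofReal (hSeq n x) := by
          simp_rw [ENNReal.ofReal_mul hBpos]
          exact lintegral_const_mul _ ((hSeq_continuous n).measurable.ennreal_ofReal)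
    _ ≤ ENNReal.ofReal B * ENNReal.ofReal (1 / (8 * (n:ℝ) ^ 4)) := by
          exact mul_le_mul_right (lint_h hn) _
    _ = ENNReal.ofReal (B * (1 / (8 * (n:ℝ) ^ 4))) := (ENNReal.ofReal_mul hBpos).symm
    _ ≤ ENNReal.ofReal (((n:ℝ) ^ 2)⁻¹) := by
          apply ENNReal.ofReal_le_ofReal
          rw [hB, mul_one_div, inv_eq_one_div,
            div_le_div_iff₀ (by positivity) (by positivity)]
          have h1 : ((n:ℝ)+1)^2 ≤ 4*(n:ℝ)^2 := by nlinarith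
          have h2 : (1:ℝ) ≤ (n:ℝ)^2 := by nlinarith
          nlinarith [mul_le_mul_of_nonneg_left h1 (sq_nonneg (n:ℝ)),
            mul_le_mul_of_nonneg_left h2 (sq_nonneg (n:ℝ)), sq_nonneg (n:ℝ)]
  · have hG : ∀ x, GFun n x = 0 := fun x => if_neg hn
    simp [hG]

lemma master_integral :
    ∫⁻ x : ℝ, ENNReal.ofReal ((1 + x ^ 2) * nuFun x) < ⊤ := by
  have key : ∀ x : ℝ, ENNReal.ofReal ((1 + x ^ 2) * nuFun x)
      ≤ ENNReal.ofReal ((1 + x ^ 2) * Real.exp (-x ^ 4))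
        + ∑' n : ℕ, ENNReal.ofReal ((1 + x ^ 2) * GFun n x) := by
    intro x
    have h1 : (1 + x ^ 2) * nuFun x
        = (1 + x ^ 2) * Real.exp (-x ^ 4) + (1 + x ^ 2) * TFun x := by
      rw [nuFun_eq]; ring
    have h2 : ENNReal.ofReal ((1 + x ^ 2) * TFun x)
        = ∑' n : ℕ, ENNReal.ofReal ((1 + x ^ 2) * GFun n x) := by
      rw [show (1 + x ^ 2) * TFun x = ∑' n : ℕ, (1 + x ^ 2) * GFun n x from
        (tsum_mul_left).symm]
      exact ENNReal.ofReal_tsum_of_nonneg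
        (fun n => mul_nonneg (by positivity) (GFun_nonneg n x))
        ((GFun_summable x).mul_left _)
    rw [h1]
    exact le_trans ENNReal.ofReal_add_le (by rw [h2])
  have hA : ∫⁻ x : ℝ, ENNReal.ofReal ((1 + x ^ 2) * Real.exp (-x ^ 4)) < ⊤ :=
    integrable_poly_exp.lintegral_lt_top
  have hS : ∫⁻ x : ℝ, ∑' n : ℕ, ENNReal.ofReal ((1 + x ^ 2) * GFun n x) < ⊤ := by
    rw [lintegral_tsum fun n =>
      (show Measurable fun x : ℝ => ENNReal.ofReal ((1 + x ^ 2) * GFun n x) from ((continuous_const.add (continuous_pow 2)).mul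
        (GFun_continuous n)).measurable.ennreal_ofReal).aemeasurable]
    have hsum : Summable (fun n : ℕ => ((n:ℝ) ^ 2)⁻¹) := by
      have := Real.summable_one_div_nat_pow.2 (show 1 < 2 by norm_num)
      simpa [one_div] using this
    calc ∑' n : ℕ, ∫⁻ x : ℝ, ENNReal.ofReal ((1 + x ^ 2) * GFun n x)
        ≤ ∑' n : ℕ, ENNReal.ofReal (((n:ℝ) ^ 2)⁻¹) := ENNReal.tsum_le_tsum lint_G
    _ = ENNReal.ofReal (∑' n : ℕ, ((n:ℝ) ^ 2)⁻¹) :=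
        (ENNReal.ofReal_tsum_of_nonneg (fun n => by positivity) hsum).symm
    _ < ⊤ := ENNReal.ofReal_lt_top
  calc ∫⁻ x : ℝ, ENNReal.ofReal ((1 + x ^ 2) * nuFun x)
      ≤ ∫⁻ x : ℝ, (ENNReal.ofReal ((1 + x ^ 2) * Real.exp (-x ^ 4))
        + ∑' n : ℕ, ENNReal.ofReal ((1 + x ^ 2) * GFun n x)) := lintegral_mono key
  _ = (∫⁻ x : ℝ, ENNReal.ofReal ((1 + x ^ 2) * Real.exp (-x ^ 4)))
        + ∫⁻ x : ℝ, ∑' n : ℕ, ENNReal.ofReal ((1 + x ^ 2) * GFun n x) :=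
      lintegral_add_left ((continuous_const.add (continuous_pow 2)).mul
        (Real.continuous_exp.comp (continuous_pow 4).neg)).measurable.ennreal_ofReal _
  _ < ⊤ := ENNReal.add_lt_top.2 ⟨hA, hS⟩

lemma Z_lt_top : ∫⁻ x : ℝ, ENNReal.ofReal (nuFun x) < ⊤ := by
  refine lt_of_le_of_lt (lintegral_mono fun x => ENNReal.ofReal_le_ofReal ?_) master_integral
  exact le_mul_of_one_le_left (nuFun_pos x).le (by nlinarith [sq_nonneg x])

lemma Z_pos : 0 < ∫⁻ x : ℝ, ENNReal.ofReal (nuFun x) := by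
  rw [lintegral_pos_iff_support (nuFun_continuous.measurable.ennreal_ofReal)]
  have hs : Function.support (fun x : ℝ => ENNReal.ofReal (nuFun x)) = Set.univ :=
    Set.eq_univ_of_forall fun x => by
      simp only [Function.mem_support, ne_eq, ENNReal.ofReal_eq_zero, not_le]
      exact nuFun_pos x
  rw [hs, Real.volume_univ]
  exact ENNReal.zero_lt_top

/-- the intervals `I_n` (n ≥ 2) satisfy `I_n ⊆ [n, n + 1/4]` and are
pairwise disjoint; the normalizing constant `Z = ∫ ν` satisfies `0 < Z < ∞`;
`ν` is continuous with `0 < ν ≤ 2`; and `f = ν / Z` is a continuous, strictly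
positive, bounded probability density on `ℝ` with finite second moment and finite
positive log-moment. -/
theorem tent_density_properties :
    (∀ n : ℕ, 2 ≤ n → ISeq n ⊆ Set.Icc (n : ℝ) ((n : ℝ) + 1 / 4)) ∧
    (∀ m n : ℕ, 2 ≤ m → 2 ≤ n → m ≠ n → Disjoint (ISeq m) (ISeq n)) ∧
    (0 < ∫⁻ x : ℝ, ENNReal.ofReal (nuFun x)) ∧
    (∫⁻ x : ℝ, ENNReal.ofReal (nuFun x) < ⊤) ∧
    Continuous nuFun ∧
    (∀ x, 0 < nuFun x ∧ nuFun x ≤ 2) ∧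
    (∀ f : ℝ → ℝ,
      (∀ x, f x = nuFun x / (∫⁻ x : ℝ, ENNReal.ofReal (nuFun x)).toReal) →
      IsProbDensity volume f ∧ Continuous f ∧ (∀ x, 0 < f x) ∧
      (∃ C : ℝ, ∀ x, f x ≤ C) ∧
      (∫⁻ x : ℝ, ENNReal.ofReal (x ^ 2 * f x) < ⊤) ∧
      (∫⁻ x : ℝ, ENNReal.ofReal (f x * logPlus (f x)) < ⊤)) := by
  have hIsub : ∀ n : ℕ, 2 ≤ n → ISeq n ⊆ Set.Icc (n : ℝ) ((n : ℝ) + 1 / 4) := by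
    intro n hn
    exact Set.Icc_subset_Icc le_rfl (by linarith [fourNw_le hn])
  refine ⟨hIsub, ?_, Z_pos, Z_lt_top, nuFun_continuous,
    fun x => ⟨nuFun_pos x, nuFun_le_two x⟩, ?_⟩
  · -- disjointness
    have key : ∀ a b : ℕ, 2 ≤ a → 2 ≤ b → a < b → Disjoint (ISeq a) (ISeq b) := by
      intro a b ha hb hab
      apply Set.disjoint_left.2
      intro x hxa hxb
      have h1 : x ≤ (a:ℝ) + 1/4 := (hIsub a ha hxa).2
      have h2 : (b:ℝ) ≤ x := hxb.1
      have h3 : (a:ℝ) + 1 ≤ (b:ℝ) := by exact_mod_cast hab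
      linarith
    intro m n hm hn hmn
    rcases lt_or_gt_of_ne hmn with h | h
    · exact key m n hm hn h
    · exact (key n m hn hm h).symm
  · -- the density part
    intro f hf
    set Z := ∫⁻ x : ℝ, ENNReal.ofReal (nuFun x) with hZ
    have hZ0 : Z ≠ 0 := Z_pos.ne'
    have hZt : Z ≠ ⊤ := Z_lt_top.ne
    have hr : 0 < Z.toReal := ENNReal.toReal_pos hZ0 hZt
    have hfx : ∀ x, f x = nuFun x * (Z.toReal)⁻¹ := fun x => by
      rw [hf x, div_eq_mul_inv]
    have hfc : Continuous f := by
      have : f = fun x => nuFun x / Z.toReal := funext hf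
      rw [this]
      exact nuFun_continuous.div_const _
    have hfpos : ∀ x, 0 < f x := fun x => by
      rw [hf x]; exact div_pos (nuFun_pos x) hr
    have hint : ∫⁻ x : ℝ, ENNReal.ofReal (f x) = 1 := by
      have hofReal : ∀ x, ENNReal.ofReal (f x)
          = ENNReal.ofReal (nuFun x) * ENNReal.ofReal (Z.toReal)⁻¹ := fun x => by
        rw [hfx x, ENNReal.ofReal_mul (nuFun_pos x).le]
      simp_rw [hofReal]
      rw [lintegral_mul_const _ nuFun_continuous.measurable.ennreal_ofReal,
        ENNReal.ofReal_inv_of_pos hr, ENNReal.ofReal_toReal hZt, ← hZ]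
      exact ENNReal.mul_inv_cancel hZ0 hZt
    have hbdd : ∀ x, f x ≤ 2 / Z.toReal := fun x => by
      rw [hf x]
      gcongr
      exact nuFun_le_two x
    refine ⟨⟨hfc.measurable, fun x => (hfpos x).le, hint⟩, hfc, hfpos,
      ⟨2 / Z.toReal, hbdd⟩, ?_, ?_⟩
    · -- second moment
      have hb : ∀ x : ℝ, ENNReal.ofReal (x ^ 2 * f x)
          ≤ ENNReal.ofReal (Z.toReal)⁻¹ * ENNReal.ofReal ((1 + x ^ 2) * nuFun x) := by
        intro x
        rw [← ENNReal.ofReal_mul (by positivity)]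
        apply ENNReal.ofReal_le_ofReal
        rw [hfx x]
        have h1 := nuFun_pos x
        have hrinv : (0:ℝ) ≤ (Z.toReal)⁻¹ := by positivity
        nlinarith [mul_nonneg hrinv h1.le]
      calc ∫⁻ x : ℝ, ENNReal.ofReal (x ^ 2 * f x)
          ≤ ∫⁻ x : ℝ, ENNReal.ofReal (Z.toReal)⁻¹
            * ENNReal.ofReal ((1 + x ^ 2) * nuFun x) := lintegral_mono hb
      _ = ENNReal.ofReal (Z.toReal)⁻¹
            * ∫⁻ x : ℝ, ENNReal.ofReal ((1 + x ^ 2) * nuFun x) :=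
          lintegral_const_mul _ ((continuous_const.add (continuous_pow 2)).mul
            nuFun_continuous).measurable.ennreal_ofReal
      _ < ⊤ := ENNReal.mul_lt_top ENNReal.ofReal_lt_top master_integral
    · -- log moment
      set C : ℝ := 2 / Z.toReal with hC
      have hL : ∀ x, f x * logPlus (f x) ≤ logPlus C * f x := by
        intro x
        have h1 : logPlus (f x) ≤ logPlus C :=
          max_le_max (Real.log_le_log (hfpos x) (hbdd x)) le_rfl
        calc f x * logPlus (f x) ≤ f x * logPlus C :=
              mul_le_mul_of_nonneg_left h1 (hfpos x).le
        _ = logPlus C * f x := mul_comm _ _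
      have hLnn : (0:ℝ) ≤ logPlus C := le_max_right _ _
      calc ∫⁻ x : ℝ, ENNReal.ofReal (f x * logPlus (f x))
          ≤ ∫⁻ x : ℝ, ENNReal.ofReal (logPlus C) * ENNReal.ofReal (f x) := by
            apply lintegral_mono
            intro x
            dsimp only
            rw [← ENNReal.ofReal_mul hLnn]
            exact ENNReal.ofReal_le_ofReal (hL x)
      _ = ENNReal.ofReal (logPlus C) * ∫⁻ x : ℝ, ENNReal.ofReal (f x) :=
          lintegral_const_mul _ hfc.measurable.ennreal_ofReal
      _ = ENNReal.ofReal (logPlus C) := by rw [hint, mul_one]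
      _ < ⊤ := ENNReal.ofReal_lt_top
end

section
/- Let f be a continuous probability density on ℝ^d. For every R > 0 and every η > 0, there exists a finite Gaussian mixture density h on ℝ^d such that sup_{‖x‖ ≤ R} |h(x) − f(x)| < η. -/
open MeasureTheory Matrix
open scoped ENNReal NNReal BigOperators

namespace GA
open Real Filter

variable {d : ℕ} {s δ b B : ℝ}

noncomputable def gk (d : ℕ) (s : ℝ) (z : EuclideanSpace ℝ (Fin d)) : ℝ :=
  (Real.sqrt ((2 * Real.pi * s) ^ d))⁻¹ * Real.exp (-(1 / 2) * (s⁻¹ * ‖z‖ ^ 2))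

lemma as_pos (hs : 0 < s) : 0 < (Real.sqrt ((2 * Real.pi * s) ^ d))⁻¹ := by
  have : 0 < 2 * Real.pi * s := by positivity
  positivity

lemma gk_pos (hs : 0 < s) (z : EuclideanSpace ℝ (Fin d)) : 0 < gk d s z :=
  mul_pos (as_pos hs) (Real.exp_pos _)

lemma gk_le (hs : 0 < s) (z : EuclideanSpace ℝ (Fin d)) :
    gk d s z ≤ (Real.sqrt ((2 * Real.pi * s) ^ d))⁻¹ := by
  have h1 : Real.exp (-(1 / 2) * (s⁻¹ * ‖z‖ ^ 2)) ≤ 1 := by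
    rw [Real.exp_le_one_iff]
    have : 0 ≤ s⁻¹ * ‖z‖ ^ 2 := by positivity
    nlinarith
  calc gk d s z ≤ (Real.sqrt ((2 * Real.pi * s) ^ d))⁻¹ * 1 :=
        mul_le_mul_of_nonneg_left h1 (as_pos hs).le
    _ = _ := mul_one _

lemma gk_cont (s : ℝ) : Continuous (gk d s) := by
  unfold gk; fun_prop

lemma posDef_smul_one (hs : 0 < s) : (s • (1 : Matrix (Fin d) (Fin d) ℝ)).PosDef := by
  have : s • (1 : Matrix (Fin d) (Fin d) ℝ) = Matrix.diagonal (fun _ => s) := by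
    ext i j
    by_cases h : i = j <;> simp [Matrix.diagonal, Matrix.one_apply, h]
  rw [this]
  exact Matrix.PosDef.diagonal fun _ => hs

lemma smul_one_inv (hs : 0 < s) :
    (s • (1 : Matrix (Fin d) (Fin d) ℝ))⁻¹ = s⁻¹ • (1 : Matrix (Fin d) (Fin d) ℝ) := by
  apply Matrix.inv_eq_right_inv
  rw [Matrix.smul_mul, Matrix.mul_smul, Matrix.one_mul, smul_smul, mul_inv_cancel₀ hs.ne']
  simp

lemma norm_sq_eq (z : EuclideanSpace ℝ (Fin d)) : ‖z‖ ^ 2 = ∑ i, z i * z i := by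
  rw [EuclideanSpace.norm_eq, Real.sq_sqrt (by positivity)]
  exact Finset.sum_congr rfl fun i _ => by simp [Real.norm_eq_abs, sq_abs, sq]

lemma gaussDensity_smul_one (hs : 0 < s) (μ x : EuclideanSpace ℝ (Fin d)) :
    gaussDensity μ (s • (1 : Matrix (Fin d) (Fin d) ℝ)) x = gk d s (x - μ) := by
  unfold gaussDensity gk
  have hdet : (s • (1 : Matrix (Fin d) (Fin d) ℝ)).det = s ^ d := by
    simp [Matrix.det_smul]
  rw [hdet, smul_one_inv hs, ← mul_pow]
  congr 2
  have hv : (fun i => x i - μ i) = fun i => (x - μ) i := by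
    funext i; simp
  rw [Matrix.smul_mulVec, Matrix.one_mulVec, dotProduct_smul, norm_sq_eq (x - μ)]
  have hw : ∀ i, (x - μ) i = x i - μ i := fun i => by simp
  simp only [dotProduct, Pi.smul_apply, smul_eq_mul, hw, Finset.mul_sum]


lemma integrable_exp_neg_mul_sq_norm (hb : 0 < b) :
    Integrable fun z : EuclideanSpace ℝ (Fin d) => Real.exp (-b * ‖z‖ ^ 2) := by
  have h := (GaussianFourier.integrable_cexp_neg_mul_sq_norm_add (V := EuclideanSpace ℝ (Fin d))
    (b := (b : ℂ)) (by simpa using hb) 0 0).norm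
  refine h.congr (Eventually.of_forall fun z => ?_)
  simp [Complex.norm_exp, ← Complex.ofReal_pow]

lemma sqrt_pow_eq_rpow (hs : 0 < s) :
    Real.sqrt ((2 * Real.pi * s) ^ d) = (2 * Real.pi * s) ^ ((d : ℝ) / 2) := by
  have h2 : (0:ℝ) < 2 * Real.pi * s := by positivity
  rw [Real.sqrt_eq_rpow, ← Real.rpow_natCast (2 * Real.pi * s) d, ← Real.rpow_mul h2.le,
    mul_one_div]

lemma gk_eq (hs : 0 < s) (z : EuclideanSpace ℝ (Fin d)) :
    gk d s z = (Real.sqrt ((2 * Real.pi * s) ^ d))⁻¹ * Real.exp (-(2*s)⁻¹ * ‖z‖ ^ 2) := by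
  unfold gk
  have : -(1/2 : ℝ) * (s⁻¹ * ‖z‖ ^ 2) = -(2*s)⁻¹ * ‖z‖ ^ 2 := by
    field_simp
  rw [this]

lemma integrable_gk (hs : 0 < s) : Integrable (gk d s) := by
  have hb : (0:ℝ) < (2 * s)⁻¹ := by positivity
  have h := (integrable_exp_neg_mul_sq_norm (d := d) hb).const_mul
    (Real.sqrt ((2 * Real.pi * s) ^ d))⁻¹
  exact h.congr (Eventually.of_forall fun z => (gk_eq hs z).symm)

lemma integral_gk (hs : 0 < s) : ∫ z : EuclideanSpace ℝ (Fin d), gk d s z = 1 := by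
  have hb : (0:ℝ) < (2 * s)⁻¹ := by positivity
  have key : ∀ z : EuclideanSpace ℝ (Fin d),
      gk d s z = (Real.sqrt ((2 * Real.pi * s) ^ d))⁻¹ * Real.exp (-(2*s)⁻¹ * ‖z‖ ^ 2) :=
    fun z => gk_eq hs z
  simp_rw [key]
  rw [integral_const_mul, GaussianFourier.integral_rexp_neg_mul_sq_norm hb]
  have hr : Real.pi / (2*s)⁻¹ = 2 * Real.pi * s := by field_simp
  have hfr : (Module.finrank ℝ (EuclideanSpace ℝ (Fin d)) : ℝ) = (d : ℝ) := by
    simp [finrank_euclideanSpace]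
  rw [hr, hfr, ← sqrt_pow_eq_rpow hs]
  have : (0:ℝ) < Real.sqrt ((2 * Real.pi * s) ^ d) := by
    have : (0:ℝ) < 2 * Real.pi * s := by positivity
    positivity
  field_simp

lemma integral_gk_sub (hs : 0 < s) (x : EuclideanSpace ℝ (Fin d)) :
    ∫ y, gk d s (x - y) = 1 := by
  rw [integral_sub_left_eq_self (gk d s) volume x]; exact integral_gk hs

lemma integrable_gk_sub (hs : 0 < s) (x : EuclideanSpace ℝ (Fin d)) :
    Integrable fun y => gk d s (x - y) :=
  (integrable_gk hs).comp_sub_left x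

lemma gk_tail (hs : 0 < s) (hδ : 0 < δ) :
    ∫ z in {z : EuclideanSpace ℝ (Fin d) | δ ≤ ‖z‖}, gk d s z
      ≤ Real.exp (-δ ^ 2 / (4 * s)) * 2 ^ d := by
  set S := {z : EuclideanSpace ℝ (Fin d) | δ ≤ ‖z‖} with hS
  have hSm : MeasurableSet S := (isClosed_le continuous_const continuous_norm).measurableSet
  set a := (Real.sqrt ((2 * Real.pi * s) ^ d))⁻¹ with ha
  have ha0 : 0 < a := as_pos hs
  set c := a * Real.exp (-δ ^ 2 / (4 * s)) with hc
  have hb4 : (0:ℝ) < (4 * s)⁻¹ := by positivity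
  have hint4 : Integrable fun z : EuclideanSpace ℝ (Fin d) =>
      c * Real.exp (-(4*s)⁻¹ * ‖z‖ ^ 2) :=
    (integrable_exp_neg_mul_sq_norm hb4).const_mul c
  have hpt : ∀ z ∈ S, gk d s z ≤ c * Real.exp (-(4*s)⁻¹ * ‖z‖ ^ 2) := by
    intro z hz
    have hz' : δ ≤ ‖z‖ := hz
    have hrhs : c * Real.exp (-(4*s)⁻¹ * ‖z‖ ^ 2)
        = a * Real.exp (-δ ^ 2 / (4 * s) + -(4*s)⁻¹ * ‖z‖ ^ 2) := by
      rw [hc, Real.exp_add]; ring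
    rw [gk_eq hs z, hrhs]
    apply mul_le_mul_of_nonneg_left _ ha0.le
    apply Real.exp_le_exp.2
    have h1 : δ ^ 2 ≤ ‖z‖ ^ 2 := by nlinarith [norm_nonneg z]
    have e2 : (2*s)⁻¹ = 2 * (4*s)⁻¹ := by field_simp; ring
    rw [e2, div_eq_mul_inv]
    nlinarith [mul_le_mul_of_nonneg_right h1 hb4.le]
  have h1 : ∫ z in S, gk d s z ≤ ∫ z in S, c * Real.exp (-(4*s)⁻¹ * ‖z‖ ^ 2) := by
    apply setIntegral_mono_on ((integrable_gk hs).integrableOn) hint4.integrableOn hSm hpt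
  have h2 : ∫ z in S, c * Real.exp (-(4*s)⁻¹ * ‖z‖ ^ 2)
      ≤ ∫ z : EuclideanSpace ℝ (Fin d), c * Real.exp (-(4*s)⁻¹ * ‖z‖ ^ 2) := by
    apply setIntegral_le_integral hint4
    exact Eventually.of_forall fun z => by positivity
  have h3 : ∫ z : EuclideanSpace ℝ (Fin d), c * Real.exp (-(4*s)⁻¹ * ‖z‖ ^ 2)
      ≤ Real.exp (-δ ^ 2 / (4 * s)) * 2 ^ d := by
    rw [integral_const_mul, GaussianFourier.integral_rexp_neg_mul_sq_norm hb4]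
    have hfr : (Module.finrank ℝ (EuclideanSpace ℝ (Fin d)) : ℝ) = (d : ℝ) := by
      simp [finrank_euclideanSpace]
    have hr : Real.pi / (4*s)⁻¹ = 4 * Real.pi * s := by field_simp
    rw [hfr, hr]
    have h2pis : (0:ℝ) < 2 * Real.pi * s := by positivity
    have key : a * (4 * Real.pi * s) ^ ((d:ℝ)/2) ≤ 2 ^ d := by
      rw [ha, sqrt_pow_eq_rpow hs]
      have h4 : (4 * Real.pi * s : ℝ) = 2 * (2 * Real.pi * s) := by ring
      rw [h4, Real.mul_rpow (by norm_num) h2pis.le]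
      rw [inv_mul_eq_div, mul_div_assoc, div_self (by positivity), mul_one]
      calc (2:ℝ) ^ ((d:ℝ)/2) ≤ 2 ^ (d:ℝ) :=
            Real.rpow_le_rpow_of_exponent_le one_le_two
              (by have : (0:ℝ) ≤ (d:ℝ) := Nat.cast_nonneg d; linarith)
        _ = 2 ^ d := by rw [Real.rpow_natCast]
    calc c * (4 * Real.pi * s) ^ ((d:ℝ)/2)
        = Real.exp (-δ ^ 2 / (4 * s)) * (a * (4 * Real.pi * s) ^ ((d:ℝ)/2)) := by rw [hc]; ring
      _ ≤ Real.exp (-δ ^ 2 / (4 * s)) * 2 ^ d := by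
          apply mul_le_mul_of_nonneg_left key (Real.exp_pos _).le
  linarith

lemma abs_exp_neg_sub {a b : ℝ} (ha : 0 ≤ a) (hb : 0 ≤ b) :
    |Real.exp (-a) - Real.exp (-b)| ≤ |a - b| := by
  wlog hab : a ≤ b generalizing a b
  · rw [abs_sub_comm, abs_sub_comm a b]; exact this hb ha (le_of_not_ge hab)
  have h1 : Real.exp (-b) ≤ Real.exp (-a) := Real.exp_le_exp.2 (by linarith)
  rw [abs_of_nonneg (by linarith), abs_of_nonpos (by linarith), neg_sub]
  have h2 : Real.exp (-b) = Real.exp (-a) * Real.exp (a - b) := by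
    rw [← Real.exp_add]; ring_nf
  have h3 : (a - b) + 1 ≤ Real.exp (a - b) := Real.add_one_le_exp _
  have h4 : Real.exp (-a) ≤ 1 := Real.exp_le_one_iff.2 (by linarith)
  nlinarith [Real.exp_pos (-a)]

lemma gk_lip (hs : 0 < s) {u v : EuclideanSpace ℝ (Fin d)} (hu : ‖u‖ ≤ B) (hv : ‖v‖ ≤ B) :
    |gk d s u - gk d s v| ≤ (Real.sqrt ((2 * Real.pi * s) ^ d))⁻¹ * (s⁻¹ * B) * ‖u - v‖ := by
  set a := (Real.sqrt ((2 * Real.pi * s) ^ d))⁻¹ with ha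
  have ha0 : 0 < a := as_pos hs
  have hB : 0 ≤ B := le_trans (norm_nonneg u) hu
  unfold gk
  rw [← mul_sub, abs_mul, abs_of_nonneg ha0.le]
  have key : |Real.exp (-(1/2) * (s⁻¹ * ‖u‖ ^ 2)) - Real.exp (-(1/2) * (s⁻¹ * ‖v‖ ^ 2))|
      ≤ (s⁻¹ * B) * ‖u - v‖ := by
    have e1 : -(1/2) * (s⁻¹ * ‖u‖ ^ 2) = -((1/2) * (s⁻¹ * ‖u‖ ^ 2)) := by ring
    have e2 : -(1/2) * (s⁻¹ * ‖v‖ ^ 2) = -((1/2) * (s⁻¹ * ‖v‖ ^ 2)) := by ring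
    rw [e1, e2]
    have h := abs_exp_neg_sub (a := (1/2) * (s⁻¹ * ‖u‖ ^ 2)) (b := (1/2) * (s⁻¹ * ‖v‖ ^ 2))
      (by positivity) (by positivity)
    refine le_trans h ?_
    have hd : |(1/2) * (s⁻¹ * ‖u‖ ^ 2) - (1/2) * (s⁻¹ * ‖v‖ ^ 2)|
        = (1/2) * s⁻¹ * |‖u‖ ^ 2 - ‖v‖ ^ 2| := by
      rw [← abs_of_nonneg (show (0:ℝ) ≤ (1/2) * s⁻¹ by positivity), ← abs_mul]
      congr 1; ring
    rw [hd]
    have hsq : |‖u‖ ^ 2 - ‖v‖ ^ 2| ≤ 2 * B * ‖u - v‖ := by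
      have h1 : |‖u‖ - ‖v‖| ≤ ‖u - v‖ := abs_norm_sub_norm_le u v
      have h2 : |‖u‖ + ‖v‖| ≤ 2 * B := by
        rw [abs_of_nonneg (by positivity)]; linarith
      calc |‖u‖ ^ 2 - ‖v‖ ^ 2| = |‖u‖ + ‖v‖| * |‖u‖ - ‖v‖| := by
            rw [← abs_mul]; congr 1; ring
        _ ≤ (2 * B) * ‖u - v‖ := by
            apply mul_le_mul h2 h1 (abs_nonneg _) (by positivity)
    calc (1/2) * s⁻¹ * |‖u‖ ^ 2 - ‖v‖ ^ 2| ≤ (1/2) * s⁻¹ * (2 * B * ‖u - v‖) := by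
          apply mul_le_mul_of_nonneg_left hsq (by positivity)
      _ = (s⁻¹ * B) * ‖u - v‖ := by ring
  calc a * |Real.exp (-(1/2) * (s⁻¹ * ‖u‖ ^ 2)) - Real.exp (-(1/2) * (s⁻¹ * ‖v‖ ^ 2))|
      ≤ a * ((s⁻¹ * B) * ‖u - v‖) := mul_le_mul_of_nonneg_left key ha0.le
    _ = a * (s⁻¹ * B) * ‖u - v‖ := by ring

lemma gk_far (hs : 0 < s) {δ : ℝ} {z : EuclideanSpace ℝ (Fin d)} (hz : δ ≤ ‖z‖) (hδ : 0 ≤ δ) :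
    gk d s z ≤ (Real.sqrt ((2 * Real.pi * s) ^ d))⁻¹ * Real.exp (-δ ^ 2 * (2 * s)⁻¹) := by
  rw [gk_eq hs z]
  apply mul_le_mul_of_nonneg_left _ (as_pos hs).le
  apply Real.exp_le_exp.2
  have h1 : δ ^ 2 ≤ ‖z‖ ^ 2 := by nlinarith [norm_nonneg z]
  have hb : (0:ℝ) ≤ (2*s)⁻¹ := by positivity
  nlinarith [mul_le_mul_of_nonneg_right h1 hb]

lemma tendsto_pow_mul_exp_neg_const (d : ℕ) {c : ℝ} (hc : 0 < c) :
    Filter.Tendsto (fun t : ℝ => t ^ d * Real.exp (-(c * t))) atTop (nhds 0) := by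
  have A := (Real.tendsto_pow_mul_exp_neg_atTop_nhds_zero d).comp
    (Filter.Tendsto.const_mul_atTop hc Filter.tendsto_id)
  have B := A.const_mul ((c⁻¹) ^ d)
  rw [mul_zero] at B
  refine B.congr fun t => ?_
  simp only [Function.comp_apply, id_eq]
  rw [mul_pow]
  have : (c⁻¹) ^ d * (c ^ d * t ^ d) = t ^ d := by
    rw [← mul_assoc, ← mul_pow, inv_mul_cancel₀ hc.ne', one_pow, one_mul]
  rw [← mul_assoc, this]

lemma as_le_of_le_one (hs0 : 0 < s) (hs1 : s ≤ 1) :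
    (Real.sqrt ((2 * Real.pi * s) ^ d))⁻¹ ≤ (s⁻¹) ^ d := by
  rw [inv_pow]
  have hsd1 : s ^ d ≤ 1 := pow_le_one₀ hs0.le hs1
  have h2 : s ^ d ≤ (2 * Real.pi * s) ^ d := by
    apply pow_le_pow_left₀ hs0.le
    nlinarith [Real.pi_gt_three]
  have h1 : s ^ d ≤ Real.sqrt ((2 * Real.pi * s) ^ d) := by
    rw [show s ^ d = Real.sqrt ((s ^ d) ^ 2) from (Real.sqrt_sq (by positivity)).symm]
    apply Real.sqrt_le_sqrt
    nlinarith [pow_nonneg hs0.le d, hsd1, h2]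
  have hpos : (0:ℝ) < s ^ d := by positivity
  calc (Real.sqrt ((2 * Real.pi * s) ^ d))⁻¹ ≤ (s ^ d)⁻¹ :=
        inv_anti₀ hpos h1
    _ = (s ^ d)⁻¹ := rfl

lemma exists_s (d : ℕ) {δ ε M : ℝ} (hδ : 0 < δ) (hε : 0 < ε) (hM : 0 < M) :
    ∃ s : ℝ, 0 < s ∧
      (Real.sqrt ((2 * Real.pi * s) ^ d))⁻¹ * Real.exp (-δ ^ 2 * (2 * s)⁻¹) ≤ ε ∧
      Real.exp (-δ ^ 2 / (4 * s)) * 2 ^ d ≤ M := by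
  have hc2 : (0:ℝ) < δ ^ 2 / 2 := by positivity
  have hc4 : (0:ℝ) < δ ^ 2 / 4 := by positivity
  have h1 := tendsto_pow_mul_exp_neg_const d hc2
  have h2 := ((tendsto_pow_mul_exp_neg_const 0 hc4).const_mul ((2:ℝ) ^ d))
  rw [mul_zero] at h2
  have hev := ((h1.eventually (gt_mem_nhds hε)).and
    ((h2.eventually (gt_mem_nhds hM)).and (Filter.eventually_ge_atTop (1:ℝ))))
  obtain ⟨t, ht1, ht2, ht3⟩ := hev.exists
  have ht0 : 0 < t := lt_of_lt_of_le one_pos ht3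
  refine ⟨t⁻¹, by positivity, ?_, ?_⟩
  · have e1 : -δ ^ 2 * (2 * t⁻¹)⁻¹ = -(δ ^ 2 / 2 * t) := by
      field_simp
    rw [e1]
    have htinv : t⁻¹ ≤ 1 := by
      nlinarith [mul_inv_cancel₀ ht0.ne', inv_nonneg.2 ht0.le]
    have hA := as_le_of_le_one (d := d) (s := t⁻¹) (by positivity) htinv
    have : (Real.sqrt ((2 * Real.pi * t⁻¹) ^ d))⁻¹ * Real.exp (-(δ ^ 2 / 2 * t))
        ≤ t ^ d * Real.exp (-(δ ^ 2 / 2 * t)) := by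
      apply mul_le_mul_of_nonneg_right _ (Real.exp_pos _).le
      simpa [inv_inv] using hA
    exact le_trans this ht1.le
  · have e2 : -δ ^ 2 / (4 * t⁻¹) = -(δ ^ 2 / 4 * t) := by field_simp
    rw [e2]
    calc Real.exp (-(δ ^ 2 / 4 * t)) * 2 ^ d
        = 2 ^ d * (t ^ 0 * Real.exp (-(δ ^ 2 / 4 * t))) := by ring
      _ ≤ M := ht2.le

lemma integral_gk_sub_far (hs : 0 < s) {δ : ℝ} (hδ : 0 < δ) (x : EuclideanSpace ℝ (Fin d)) :
    ∫ y in {y : EuclideanSpace ℝ (Fin d) | δ ≤ dist y x}, gk d s (x - y)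
      ≤ Real.exp (-δ ^ 2 / (4 * s)) * 2 ^ d := by
  set S := {z : EuclideanSpace ℝ (Fin d) | δ ≤ ‖z‖} with hSdef
  have hSm : MeasurableSet S := (isClosed_le continuous_const continuous_norm).measurableSet
  set T := {y : EuclideanSpace ℝ (Fin d) | δ ≤ dist y x} with hTdef
  have hTm : MeasurableSet T :=
    (isClosed_le continuous_const (continuous_id.dist continuous_const)).measurableSet
  have key : ∀ y, Set.indicator T (fun y => gk d s (x - y)) y
      = Set.indicator S (gk d s) (x - y) := by
    intro y
    have hmem : y ∈ T ↔ x - y ∈ S := by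
      simp only [hTdef, hSdef, Set.mem_setOf_eq, dist_eq_norm]
      rw [norm_sub_rev]
    by_cases hy : y ∈ T
    · rw [Set.indicator_of_mem hy, Set.indicator_of_mem (hmem.1 hy)]
    · rw [Set.indicator_of_notMem hy, Set.indicator_of_notMem (fun h => hy (hmem.2 h))]
  calc ∫ y in T, gk d s (x - y)
      = ∫ y, Set.indicator T (fun y => gk d s (x - y)) y := (integral_indicator hTm).symm
    _ = ∫ y, Set.indicator S (gk d s) (x - y) := by simp_rw [key]
    _ = ∫ z, Set.indicator S (gk d s) z :=
        integral_sub_left_eq_self (Set.indicator S (gk d s)) volume x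
    _ = ∫ z in S, gk d s z := integral_indicator hSm
    _ ≤ _ := gk_tail hs hδ

lemma step1 (f : EuclideanSpace ℝ (Fin d) → ℝ) (hnn : ∀ x, 0 ≤ f x)
    (hcont : Continuous f) (hint : Integrable f) (hone : ∫ x, f x = 1)
    {R ε : ℝ} (hR : 0 < R) (hε : 0 < ε) :
    ∃ s : ℝ, 0 < s ∧ ∀ x : EuclideanSpace ℝ (Fin d), ‖x‖ ≤ R →
      |(∫ y, f y * gk d s (x - y)) - f x| ≤ ε := by
  obtain ⟨x₀, hx₀K, hx₀⟩ :=
    (isCompact_closedBall (0:EuclideanSpace ℝ (Fin d)) (R+1)).exists_isMaxOn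
    (Metric.nonempty_closedBall.2 (by linarith)) hcont.continuousOn
  set M := f x₀ + 1 with hMdef
  have hM1 : 1 ≤ M := by have := hnn x₀; simp only [hMdef]; linarith
  have hMb : ∀ y : EuclideanSpace ℝ (Fin d), ‖y‖ ≤ R + 1 → f y ≤ M := by
    intro y hy
    have := hx₀ (show y ∈ Metric.closedBall (0:EuclideanSpace ℝ (Fin d)) (R+1) by
      simpa [Metric.mem_closedBall, dist_zero_right] using hy)
    simp only [Set.mem_setOf_eq] at this
    simp only [hMdef]; linarith
  obtain ⟨δ₀, hδ₀, hδ₀'⟩ := Metric.uniformContinuousOn_iff.1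
    ((isCompact_closedBall (0:EuclideanSpace ℝ (Fin d)) (R+1)).uniformContinuousOn_of_continuous
      hcont.continuousOn) (ε/4) (by linarith)
  set δ := min (δ₀/2) 1 with hδdef
  have hδpos : 0 < δ := lt_min (by linarith) one_pos
  have hmod : ∀ x y : EuclideanSpace ℝ (Fin d), ‖x‖ ≤ R → dist y x ≤ δ → |f y - f x| ≤ ε/4 := by
    intro x y hx hyx
    have hxK : x ∈ Metric.closedBall (0:EuclideanSpace ℝ (Fin d)) (R+1) := by
      simp only [Metric.mem_closedBall, dist_zero_right]; linarith
    have hyK : y ∈ Metric.closedBall (0:EuclideanSpace ℝ (Fin d)) (R+1) := by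
      simp only [Metric.mem_closedBall, dist_zero_right]
      have : ‖y‖ ≤ ‖x‖ + dist y x := by
        rw [dist_eq_norm]
        calc ‖y‖ = ‖x + (y - x)‖ := by congr 1; abel
          _ ≤ ‖x‖ + ‖y - x‖ := norm_add_le _ _
      have hδ1 : δ ≤ 1 := min_le_right _ _
      linarith
    have hlt : dist y x < δ₀ := by
      have : δ ≤ δ₀ / 2 := min_le_left _ _
      linarith
    have := hδ₀' y hyK x hxK hlt
    rw [Real.dist_eq] at this
    exact this.le
  obtain ⟨s, hs, hfar, htail⟩ := exists_s d hδpos (show (0:ℝ) < ε/4 by linarith)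
    (show (0:ℝ) < ε/(4*M) by positivity)
  refine ⟨s, hs, fun x hx => ?_⟩
  set a := (Real.sqrt ((2 * Real.pi * s) ^ d))⁻¹ with hadef
  have ha0 : 0 < a := as_pos hs
  set gx := fun y => gk d s (x - y) with hgx
  have hgx_cont : Continuous gx := (gk_cont s).comp (continuous_const.sub continuous_id)
  have hgx_nn : ∀ y, 0 ≤ gx y := fun y => (gk_pos hs _).le
  have hgx_le : ∀ y, gx y ≤ a := fun y => gk_le hs _
  have hgx_int : Integrable gx := integrable_gk_sub hs x
  have hgx_one : ∫ y, gx y = 1 := integral_gk_sub hs x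
  have hfgx_int : Integrable (fun y => f y * gx y) := by
    apply Integrable.mono' (hint.const_mul a)
      (hcont.mul hgx_cont).aestronglyMeasurable
    refine Eventually.of_forall fun y => ?_
    show ‖f y * gx y‖ ≤ a * f y
    rw [Real.norm_eq_abs, abs_of_nonneg (mul_nonneg (hnn y) (hgx_nn y)), mul_comm a (f y)]
    exact mul_le_mul_of_nonneg_left (hgx_le y) (hnn y)
  have habs_int : Integrable (fun y => |f y - f x| * gx y) := by
    apply Integrable.mono' (hfgx_int.add (hgx_int.const_mul (f x)))
      (((hcont.sub continuous_const).abs.mul hgx_cont).aestronglyMeasurable)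
    refine Eventually.of_forall fun y => ?_
    show ‖|f y - f x| * gx y‖ ≤ f y * gx y + f x * gx y
    rw [Real.norm_eq_abs, abs_of_nonneg (mul_nonneg (abs_nonneg _) (hgx_nn y))]
    have : |f y - f x| ≤ f y + f x := by
      have := hnn x; have := hnn y
      rw [abs_le]; constructor <;> linarith [abs_nonneg (f y - f x)]
    calc |f y - f x| * gx y ≤ (f y + f x) * gx y :=
          mul_le_mul_of_nonneg_right this (hgx_nn y)
      _ = f y * gx y + f x * gx y := by ring
  have key : (∫ y, f y * gx y) - f x = ∫ y, (f y - f x) * gx y := by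
    have h1 : ∫ y, (f y - f x) * gx y = (∫ y, f y * gx y) - ∫ y, f x * gx y := by
      simp_rw [sub_mul]
      exact integral_sub hfgx_int (hgx_int.const_mul (f x))
    rw [h1, integral_const_mul, hgx_one, mul_one]
  rw [key]
  have habs : |∫ y, (f y - f x) * gx y| ≤ ∫ y, |f y - f x| * gx y := by
    have := norm_integral_le_integral_norm (fun y => (f y - f x) * gx y) (μ := volume)
    rw [Real.norm_eq_abs] at this
    refine le_trans this (le_of_eq (integral_congr_ae (Eventually.of_forall fun y => ?_)))
    simp only [Real.norm_eq_abs, abs_mul, abs_of_nonneg (hgx_nn y)]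
  refine le_trans habs ?_
  set A := {y : EuclideanSpace ℝ (Fin d) | dist y x ≤ δ} with hAdef
  have hAm : MeasurableSet A :=
    (isClosed_le (continuous_id.dist continuous_const) continuous_const).measurableSet
  have hsplit : ∫ y, |f y - f x| * gx y
      = (∫ y in A, |f y - f x| * gx y) + ∫ y in Aᶜ, |f y - f x| * gx y :=
    (integral_add_compl hAm habs_int).symm
  have hnear : ∫ y in A, |f y - f x| * gx y ≤ ε/4 := by
    have h1 : ∫ y in A, |f y - f x| * gx y ≤ ∫ y in A, (ε/4) * gx y := by
      apply setIntegral_mono_on habs_int.integrableOn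
        ((hgx_int.const_mul (ε/4)).integrableOn) hAm
      intro y hy
      exact mul_le_mul_of_nonneg_right (hmod x y hx hy) (hgx_nn y)
    have h2 : ∫ y in A, (ε/4) * gx y ≤ ε/4 := by
      rw [integral_const_mul]
      have : ∫ y in A, gx y ≤ 1 := by
        rw [← hgx_one]
        exact setIntegral_le_integral hgx_int (Eventually.of_forall hgx_nn)
      nlinarith
    linarith
  have hfarpt : ∀ y ∈ Aᶜ, gx y ≤ a * Real.exp (-δ ^ 2 * (2 * s)⁻¹) := by
    intro y hy
    have : δ ≤ ‖x - y‖ := by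
      simp only [hAdef, Set.mem_compl_iff, Set.mem_setOf_eq, not_le] at hy
      rw [norm_sub_rev, ← dist_eq_norm]
      exact hy.le
    exact gk_far hs this hδpos.le
  have hfar1 : ∫ y in Aᶜ, f y * gx y ≤ ε/4 := by
    have h1 : ∫ y in Aᶜ, f y * gx y ≤ ∫ y in Aᶜ, (ε/4) * f y := by
      apply setIntegral_mono_on hfgx_int.integrableOn
        ((hint.const_mul (ε/4)).integrableOn) hAm.compl
      intro y hy
      calc f y * gx y ≤ f y * (a * Real.exp (-δ ^ 2 * (2 * s)⁻¹)) :=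
            mul_le_mul_of_nonneg_left (hfarpt y hy) (hnn y)
        _ ≤ f y * (ε/4) := mul_le_mul_of_nonneg_left hfar (hnn y)
        _ = (ε/4) * f y := by ring
    have h2 : ∫ y in Aᶜ, (ε/4) * f y ≤ ε/4 := by
      rw [integral_const_mul]
      have : ∫ y in Aᶜ, f y ≤ 1 := by
        rw [← hone]
        exact setIntegral_le_integral hint (Eventually.of_forall hnn)
      nlinarith
    linarith
  have hfar2 : ∫ y in Aᶜ, f x * gx y ≤ ε/4 := by
    rw [integral_const_mul]
    have hAc : (Aᶜ : Set (EuclideanSpace ℝ (Fin d))) ⊆ {y | δ ≤ dist y x} := by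
      intro y hy
      simp only [hAdef, Set.mem_compl_iff, Set.mem_setOf_eq, not_le] at hy
      exact hy.le
    have h1 : ∫ y in Aᶜ, gx y ≤ ∫ y in {y | δ ≤ dist y x}, gx y := by
      apply setIntegral_mono_set hgx_int.integrableOn
        (Eventually.of_forall hgx_nn) (HasSubset.Subset.eventuallyLE hAc)
    have h2 : ∫ y in {y | δ ≤ dist y x}, gx y ≤ ε/(4*M) :=
      le_trans (integral_gk_sub_far hs hδpos x) htail
    have hfx : f x ≤ M := hMb x (by linarith)
    have hfx0 := hnn x
    have hM0 : (0:ℝ) < M := by linarith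
    have hgxc_nn : 0 ≤ ∫ y in Aᶜ, gx y :=
      setIntegral_nonneg hAm.compl (fun y _ => hgx_nn y)
    calc f x * ∫ y in Aᶜ, gx y ≤ M * (ε/(4*M)) := by
          apply mul_le_mul hfx (le_trans h1 h2) hgxc_nn hM0.le
      _ = ε/4 := by field_simp
  have hfarsum : ∫ y in Aᶜ, |f y - f x| * gx y ≤ ε/4 + ε/4 := by
    have h1 : ∫ y in Aᶜ, |f y - f x| * gx y
        ≤ ∫ y in Aᶜ, (f y * gx y + f x * gx y) := by
      apply setIntegral_mono_on habs_int.integrableOn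
        ((hfgx_int.add (hgx_int.const_mul (f x))).integrableOn) hAm.compl
      intro y hy
      have hb : |f y - f x| ≤ f y + f x := by
        have := hnn x; have := hnn y
        rw [abs_le]; constructor <;> linarith
      calc |f y - f x| * gx y ≤ (f y + f x) * gx y :=
            mul_le_mul_of_nonneg_right hb (hgx_nn y)
        _ = f y * gx y + f x * gx y := by ring
    have h2 : ∫ y in Aᶜ, (f y * gx y + f x * gx y)
        = (∫ y in Aᶜ, f y * gx y) + ∫ y in Aᶜ, f x * gx y :=
      integral_add hfgx_int.integrableOn (hgx_int.const_mul (f x)).integrableOn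
    calc ∫ y in Aᶜ, |f y - f x| * gx y
        ≤ ∫ y in Aᶜ, (f y * gx y + f x * gx y) := h1
      _ = (∫ y in Aᶜ, f y * gx y) + ∫ y in Aᶜ, f x * gx y := h2
      _ ≤ ε/4 + ε/4 := by linarith
  have hnn_near : 0 ≤ ∫ y in A, |f y - f x| * gx y :=
    setIntegral_nonneg hAm (fun y _ => mul_nonneg (abs_nonneg _) (hgx_nn y))
  rw [hsplit]
  linarith

end GA


open GA Filter

set_option maxHeartbeats 1000000

/-- uniform approximation of a continuous probability density by a
finite Gaussian mixture on any fixed ball. -/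
theorem uniform_approx_on_ball {d : ℕ}
    (f : EuclideanSpace ℝ (Fin d) → ℝ) (hf : IsProbDensity volume f)
    (hcont : Continuous f) (R η : ℝ) (hR : 0 < R) (hη : 0 < η) :
    ∃ h : EuclideanSpace ℝ (Fin d) → ℝ, IsGaussianMixture h ∧
      ∀ x, ‖x‖ ≤ R → |h x - f x| < η := by
  obtain ⟨hmeas, hnn, hone⟩ := hf
  have hint : Integrable f := by
    refine ⟨hcont.aestronglyMeasurable, ?_⟩
    rw [hasFiniteIntegral_iff_ofReal (Eventually.of_forall hnn), hone]
    exact ENNReal.one_lt_top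
  have hfone : ∫ x, f x = 1 := by
    rw [integral_eq_lintegral_of_nonneg_ae (Eventually.of_forall hnn)
      hcont.aestronglyMeasurable, hone]
    simp
  set ν : Measure (EuclideanSpace ℝ (Fin d)) :=
    volume.withDensity (fun x => ENNReal.ofReal (f x)) with hνdef
  have hν_prob : IsProbabilityMeasure ν := by
    constructor
    rw [hνdef, withDensity_apply _ MeasurableSet.univ, Measure.restrict_univ, hone]
  haveI := hν_prob
  have hε5 : (0:ℝ) < η/5 := by linarith
  -- Step 1 : mollification scale s
  obtain ⟨s, hs, hstep⟩ := step1 f hnn hcont hint hfone hR hε5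
  set a := (Real.sqrt ((2 * Real.pi * s) ^ d))⁻¹ with hadef
  have ha0 : 0 < a := as_pos hs
  -- choose N with small mass outside
  have hUnion : ⋃ n : ℕ, Metric.closedBall (0:EuclideanSpace ℝ (Fin d)) n = Set.univ := by
    ext y
    simp only [Set.mem_iUnion, Metric.mem_closedBall, dist_zero_right, Set.mem_univ, iff_true]
    exact ⟨⌈‖y‖⌉₊, Nat.le_ceil _⟩
  have htight : Tendsto (fun n : ℕ => (ν (Metric.closedBall 0 n)).toReal) atTop (nhds 1) := by
    have h1 : Tendsto (fun n : ℕ => ν (Metric.closedBall 0 n)) atTop (nhds (ν Set.univ)) := by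
      rw [← hUnion]
      exact tendsto_measure_iUnion_atTop
        (fun p q hpq => Metric.closedBall_subset_closedBall (by exact_mod_cast hpq))
    have h2 := (ENNReal.tendsto_toReal (by simp : ν Set.univ ≠ ⊤)).comp h1
    simpa [measure_univ, Function.comp_def] using h2
  have hev : ∀ᶠ n : ℕ in atTop, 1 - (η/5)/a < (ν (Metric.closedBall 0 n)).toReal :=
    htight.eventually (eventually_gt_nhds (by
      have : 0 < (η/5)/a := by positivity
      linarith))
  obtain ⟨N, hN⟩ := hev.exists
  set K : Set (EuclideanSpace ℝ (Fin d)) := Metric.closedBall 0 N with hKdef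
  have hKm : MeasurableSet K := measurableSet_closedBall
  have hKcompact : IsCompact K := isCompact_closedBall _ _
  have hνfin : ∀ S : Set (EuclideanSpace ℝ (Fin d)), ν S ≠ ⊤ := fun S => measure_ne_top ν S
  have hw1 : (ν K).toReal + (ν Kᶜ).toReal = 1 := by
    have h1 : ν K + ν Kᶜ = 1 := by
      rw [measure_add_measure_compl hKm, measure_univ]
    have := congrArg ENNReal.toReal h1
    rwa [ENNReal.toReal_add (hνfin K) (hνfin Kᶜ), ENNReal.toReal_one] at this
  have hKc_small : a * (ν Kᶜ).toReal < η/5 := by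
    have h2 : (ν Kᶜ).toReal < (η/5)/a := by linarith [hw1, hN]
    calc a * (ν Kᶜ).toReal < a * ((η/5)/a) :=
          (mul_lt_mul_iff_right₀ ha0).2 h2
      _ = η/5 := by field_simp
  -- Lipschitz data
  set B0 : ℝ := R + N + 1 with hB0def
  have hB0 : 0 < B0 := by positivity
  set L : ℝ := a * (s⁻¹ * B0) with hLdef
  have hL0 : 0 ≤ L := by positivity
  set r : ℝ := min ((η/5) / (L+1)) 1 with hrdef
  have hr : 0 < r := lt_min (by positivity) one_pos
  have hLr : L * r ≤ η/5 := by
    have h1 : r ≤ (η/5) / (L+1) := min_le_left _ _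
    have h2 : L * r ≤ L * ((η/5) / (L+1)) := mul_le_mul_of_nonneg_left h1 hL0
    have h3 : L * ((η/5) / (L+1)) ≤ η/5 := by
      rw [← mul_div_assoc, div_le_iff₀ (show (0:ℝ) < L+1 by linarith)]
      nlinarith
    linarith
  -- finite cover of K by balls of radius r with centers in K
  obtain ⟨F, hFK, hFcov⟩ := hKcompact.elim_nhds_subcover (fun y => Metric.ball y r)
    (fun y _ => Metric.ball_mem_nhds y hr)
  set l := F.toList with hldef
  set m := l.length with hmdef
  set z : ℕ → EuclideanSpace ℝ (Fin d) := fun n => l.getD n 0 with hzdef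
  have hz_mem : ∀ n, n < m → z n ∈ K := by
    intro n hn
    have h1 : z n = l[n]'hn := List.getD_eq_getElem l 0 hn
    have h2 : l[n]'hn ∈ l := List.getElem_mem hn
    rw [h1]
    exact hFK _ (Finset.mem_toList.1 h2)
  have hcov : ∀ y ∈ K, ∃ n, n < m ∧ y ∈ Metric.ball (z n) r := by
    intro y hy
    have := hFcov hy
    simp only [Set.mem_iUnion] at this
    obtain ⟨c, hcF, hyc⟩ := this
    have hcl : c ∈ l := Finset.mem_toList.2 hcF
    obtain ⟨n, hn, hcn⟩ := List.mem_iff_getElem.1 hcl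
    refine ⟨n, hn, ?_⟩
    have hzc : z n = c := by
      have := List.getD_eq_getElem l 0 hn
      simp only [hzdef]
      rw [this, hcn]
    rwa [hzc]
  -- disjointified cells
  set B : ℕ → Set (EuclideanSpace ℝ (Fin d)) :=
    fun n => if h : n < m then K ∩ Metric.ball (z n) r else ∅ with hBdef
  have hBeq : ∀ n, n < m → B n = K ∩ Metric.ball (z n) r := by
    intro n h; simp only [hBdef]; rw [dif_pos h]
  have hBeq' : ∀ n, ¬ n < m → B n = ∅ := by
    intro n h; simp only [hBdef]; rw [dif_neg h]
  have hBm : ∀ n, MeasurableSet (B n) := by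
    intro n
    by_cases h : n < m
    · rw [hBeq n h]; exact hKm.inter measurableSet_ball
    · rw [hBeq' n h]; exact MeasurableSet.empty
  have hBsubK : ∀ n, B n ⊆ K := by
    intro n
    by_cases h : n < m
    · rw [hBeq n h]; exact Set.inter_subset_left
    · rw [hBeq' n h]; exact Set.empty_subset _
  set C : ℕ → Set (EuclideanSpace ℝ (Fin d)) := disjointed B with hCdef
  have hCm : ∀ n, MeasurableSet (C n) := MeasurableSet.disjointed hBm
  have hCsub : ∀ n, C n ⊆ B n := disjointed_subset B
  have hCdisj : Pairwise (Function.onFun Disjoint C) := disjoint_disjointed B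
  have hBunion : ⋃ n, B n = K := by
    apply Set.Subset.antisymm
    · exact Set.iUnion_subset hBsubK
    · intro y hy
      obtain ⟨n, hn, hyn⟩ := hcov y hy
      refine Set.mem_iUnion.2 ⟨n, ?_⟩
      rw [hBeq n hn]
      exact ⟨hy, hyn⟩
  have hCunion : ⋃ n, C n = K := by rw [hCdef, iUnion_disjointed, hBunion]
  have hCempty : ∀ n, ¬ n < m → C n = ∅ := by
    intro n hn
    apply Set.eq_empty_of_subset_empty
    have := hCsub n
    rwa [hBeq' n hn] at this
  have hKeq : K = ⋃ n ∈ Finset.range m, C n := by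
    apply Set.Subset.antisymm
    · intro y hy
      have hy2 : y ∈ ⋃ n, C n := by rw [hCunion]; exact hy
      obtain ⟨n, hyn⟩ := Set.mem_iUnion.1 hy2
      by_cases hn : n < m
      · exact Set.mem_biUnion (Finset.mem_range.2 hn) hyn
      · rw [hCempty n hn] at hyn; exact absurd hyn (Set.notMem_empty y)
    · intro y hy
      simp only [Set.mem_iUnion] at hy
      obtain ⟨n, _, hyn⟩ := hy
      exact hBsubK n (hCsub n hyn)
  have hCsubBall : ∀ n, n < m → C n ⊆ Metric.ball (z n) r := by
    intro n hn
    refine (hCsub n).trans ?_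
    rw [hBeq n hn]; exact Set.inter_subset_right
  have hνK_sum : ν K = ∑ n ∈ Finset.range m, ν (C n) := by
    rw [hKeq]
    exact measure_biUnion_finset (fun i _ j _ hij => hCdisj hij) (fun n _ => hCm n)
  have hsumK : ∑ n ∈ Finset.range m, (ν (C n)).toReal = (ν K).toReal := by
    rw [hνK_sum, ENNReal.toReal_sum (fun n _ => hνfin _)]
  -- mixture data
  set w : Fin (m+1) → ℝ :=
    Fin.cons ((ν Kᶜ).toReal) (fun i : Fin m => (ν (C (i:ℕ))).toReal) with hwdef
  set μc : Fin (m+1) → EuclideanSpace ℝ (Fin d) :=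
    Fin.cons 0 (fun i : Fin m => z (i:ℕ)) with hμcdef
  refine ⟨fun x => ∑ j, w j * gaussDensity (μc j) (s • (1:Matrix (Fin d) (Fin d) ℝ)) x,
    ⟨m+1, w, μc, fun _ => s • 1, ?_, ?_, fun _ => posDef_smul_one hs, fun x => rfl⟩, ?_⟩
  · intro j
    refine Fin.cases ?_ (fun i => ?_) j
    · simp only [hwdef, Fin.cons_zero]; exact ENNReal.toReal_nonneg
    · simp only [hwdef, Fin.cons_succ]; exact ENNReal.toReal_nonneg
  · rw [hwdef, Fin.sum_cons,
      Fin.sum_univ_eq_sum_range (fun n => (ν (C n)).toReal) m, hsumK]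
    linarith [hw1]
  · intro x hx
    show |(∑ j, w j * gaussDensity (μc j) (s • (1:Matrix (Fin d) (Fin d) ℝ)) x) - f x| < η
    have hgd : ∀ j, gaussDensity (μc j) (s • (1:Matrix (Fin d) (Fin d) ℝ)) x
        = gk d s (x - μc j) := fun j => gaussDensity_smul_one hs _ x
    have hgcont : Continuous fun y => gk d s (x - y) :=
      (gk_cont s).comp (continuous_const.sub continuous_id)
    have hgbound : ∀ y : EuclideanSpace ℝ (Fin d), ‖gk d s (x - y)‖ ≤ a := fun y => by
      rw [Real.norm_eq_abs, abs_of_nonneg (gk_pos hs _).le]; exact gk_le hs _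
    have hgνint : Integrable (fun y => gk d s (x - y)) ν :=
      Integrable.mono' (integrable_const a) hgcont.aestronglyMeasurable
        (Eventually.of_forall hgbound)
    set IK := ∫ y in K, gk d s (x - y) ∂ν with hIKdef
    set IKc := ∫ y in Kᶜ, gk d s (x - y) ∂ν with hIKcdef
    have hsplit : IK + IKc = ∫ y, gk d s (x - y) ∂ν := integral_add_compl hKm hgνint
    have hIν : |IK + IKc - f x| ≤ η/5 := by
      rw [hsplit]
      have hfm : Measurable fun y => (f y).toNNReal := hmeas.real_toNNReal
      have hid : ν = volume.withDensity (fun y => ((f y).toNNReal : ℝ≥0∞)) := rfl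
      have hconv : (∫ y, gk d s (x - y) ∂ν) = ∫ y, f y * gk d s (x - y) := by
        rw [hid, integral_withDensity_eq_integral_smul hfm]
        refine integral_congr_ae (Eventually.of_forall fun y => ?_)
        simp [NNReal.smul_def, Real.coe_toNNReal _ (hnn y)]
      rw [hconv]
      exact hstep x hx
    have hIKc_bound : |IKc| ≤ a * (ν Kᶜ).toReal := by
      rw [hIKcdef, ← Real.norm_eq_abs]
      exact norm_setIntegral_le_of_norm_le_const ((hνfin Kᶜ).lt_top)
        (fun y _ => hgbound y)
    -- per-cell bound
    have hxz : ∀ n, n < m → ‖x - z n‖ ≤ B0 := by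
      intro n hn
      have hz := hz_mem n hn
      rw [hKdef, Metric.mem_closedBall, dist_zero_right] at hz
      calc ‖x - z n‖ ≤ ‖x‖ + ‖z n‖ := norm_sub_le _ _
        _ ≤ B0 := by rw [hB0def]; linarith
    have hxy : ∀ y ∈ K, ‖x - y‖ ≤ B0 := by
      intro y hy
      rw [hKdef, Metric.mem_closedBall, dist_zero_right] at hy
      calc ‖x - y‖ ≤ ‖x‖ + ‖y‖ := norm_sub_le _ _
        _ ≤ B0 := by rw [hB0def]; linarith
    have hcell : ∀ n, n < m →
        |(ν (C n)).toReal * gk d s (x - z n) - ∫ y in C n, gk d s (x - y) ∂ν|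
          ≤ (L * r) * (ν (C n)).toReal := by
      intro n hn
      have hconst : ∫ y in C n, gk d s (x - z n) ∂ν
          = (ν (C n)).toReal * gk d s (x - z n) := by
        rw [setIntegral_const, smul_eq_mul]; rfl
      rw [← hconst,
        ← integral_sub (integrable_const _).integrableOn hgνint.integrableOn]
      rw [← Real.norm_eq_abs]
      apply norm_setIntegral_le_of_norm_le_const ((hνfin (C n)).lt_top)
      intro y hy
      have hyK : y ∈ K := hBsubK n (hCsub n hy)
      have hyb : ‖y - z n‖ ≤ r := by
        have := hCsubBall n hn hy
        rw [Metric.mem_ball, dist_eq_norm] at this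
        exact this.le
      have hlip := gk_lip hs (B := B0) (hxz n hn) (hxy y hyK)
      have hdiff : (x - z n) - (x - y) = y - z n := by abel
      rw [hdiff] at hlip
      rw [Real.norm_eq_abs]
      calc |gk d s (x - z n) - gk d s (x - y)| ≤ a * (s⁻¹ * B0) * ‖y - z n‖ := hlip
        _ ≤ L * r := by
            rw [hLdef]
            exact mul_le_mul_of_nonneg_left hyb (by positivity)
    have hIK_eq : IK = ∑ n ∈ Finset.range m, ∫ y in C n, gk d s (x - y) ∂ν := by
      rw [hIKdef]
      conv_lhs => rw [hKeq]
      exact integral_biUnion_finset (Finset.range m) (fun n _ => hCm n)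
        (fun i _ j _ hij => hCdisj hij) (fun n _ => hgνint.integrableOn)
    set S' := ∑ i : Fin m, (ν (C (i:ℕ))).toReal * gk d s (x - z (i:ℕ)) with hS'def
    have hSsum : |S' - IK| ≤ L * r := by
      rw [hS'def, hIK_eq,
        Fin.sum_univ_eq_sum_range (fun n => (ν (C n)).toReal * gk d s (x - z n)) m,
        ← Finset.sum_sub_distrib]
      refine le_trans (Finset.abs_sum_le_sum_abs _ _) ?_
      have hb : ∀ n ∈ Finset.range m,
          |(ν (C n)).toReal * gk d s (x - z n) - ∫ y in C n, gk d s (x - y) ∂ν|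
            ≤ (L * r) * (ν (C n)).toReal :=
        fun n hn => hcell n (Finset.mem_range.1 hn)
      refine le_trans (Finset.sum_le_sum hb) ?_
      rw [← Finset.mul_sum, hsumK]
      have hνK1 : (ν K).toReal ≤ 1 := by
        linarith [ENNReal.toReal_nonneg (a := ν Kᶜ)]
      calc (L * r) * (ν K).toReal ≤ (L * r) * 1 :=
            mul_le_mul_of_nonneg_left hνK1 (mul_nonneg hL0 hr.le)
        _ = L * r := mul_one _
    -- expand h x
    have hx_expand : (∑ j, w j * gaussDensity (μc j) (s • (1:Matrix (Fin d) (Fin d) ℝ)) x)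
        = (ν Kᶜ).toReal * gk d s x + S' := by
      simp_rw [hgd]
      rw [Fin.sum_univ_succ, hS'def]
      simp only [hwdef, hμcdef, Fin.cons_zero, Fin.cons_succ, sub_zero]
    have hT0a : 0 ≤ (ν Kᶜ).toReal * gk d s x :=
      mul_nonneg ENNReal.toReal_nonneg (gk_pos hs _).le
    have hT0b : (ν Kᶜ).toReal * gk d s x ≤ a * (ν Kᶜ).toReal := by
      rw [mul_comm]
      exact mul_le_mul_of_nonneg_right (gk_le hs _) ENNReal.toReal_nonneg
    have e1 := abs_le.1 hSsum
    have e2 := abs_le.1 hIν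
    have e3 := abs_le.1 hIKc_bound
    rw [hx_expand, abs_lt]
    constructor <;> nlinarith [hKc_small, hLr]
end

section
/- Let f be a probability density on ℝ^d with probability measure F, let R ≥ 1, and set α = ∫_{‖x‖>R} f dλ, β = ∫_{‖x‖>R} f log_+ f dλ, μ₂ = ∫_{‖x‖>R} ‖x‖² f dλ. Assume 0 < α < 1/4. Let φ_R(x) = (2πR²)^{-d/2} exp(−‖x‖²/(2R²)) be the Gaussian density with mean 0 and covariance R² I_d, and let g be any probability density on ℝ^d satisfying g(x) ≥ α φ_R(x) for all x. Then ∫_{‖x‖>R} log_+(f(x)/g(x)) dF(x) ≤ β + α log(1/α) + α (d/2) log(2πR²) + μ₂/(2R²). -/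
/-!
Pointwise `log⁺ (f / g) ≤ log⁺ f + log⁺ (α φ_R)⁻¹`, and since `α φ_R ≤ 1` the last term is
`-log (α φ_R(x)) = log (1/α) + (d/2) log (2πR²) + ‖x‖²/(2R²)`. Multiplying by `f` and integrating
over `{‖x‖ > R}`, the constant terms pick up the tail mass `α`.
-/

open MeasureTheory Matrix
open scoped ENNReal NNReal BigOperators

open Real

lemma logPlus_eq_posLog : logPlus = Real.posLog :=
  funext fun _ => max_comm _ _

lemma logPlus_div_le {a b c : ℝ} (hc : 0 < c) (hc1 : c ≤ 1) (hcb : c ≤ b) :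
    logPlus (a / b) ≤ logPlus a - log c := by
  have hc_inv : 1 ≤ |c⁻¹| := by
    rw [abs_inv, abs_of_pos hc]
    exact (one_le_inv₀ hc).2 hc1
  rw [logPlus_eq_posLog, div_eq_mul_inv, sub_eq_add_neg, ← log_inv, ← posLog_eq_log hc_inv]
  calc log⁺ (a * b⁻¹) ≤ log⁺ a + log⁺ b⁻¹ := posLog_mul
    _ ≤ log⁺ a + log⁺ c⁻¹ := by
      gcongr
      exact inv_nonneg.2 (hc.le.trans hcb)

lemma setLIntegral_withDensity_ofReal {X : Type*} [MeasurableSpace X] (μ : Measure X)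
    {f : X → ℝ} (hfm : Measurable f) (hf0 : ∀ x, 0 ≤ f x) {s : Set X} (hs : MeasurableSet s)
    (h : X → ℝ) :
    ∫⁻ x in s, ENNReal.ofReal (h x) ∂μ.withDensity (fun x => ENNReal.ofReal (f x)) =
      ∫⁻ x in s, ENNReal.ofReal (f x * h x) ∂μ := by
  rw [setLIntegral_withDensity_eq_setLIntegral_mul_non_measurable μ hfm.ennreal_ofReal _ hs
    (ae_of_all _ fun _ => ENNReal.ofReal_lt_top)]
  simp only [Pi.mul_apply, ENNReal.ofReal_mul (hf0 _)]

lemma lintegral_ofReal_le_of_le_add_mul_add_div {X : Type*} [MeasurableSpace X] {μ : Measure X}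
    {h a f b : X → ℝ} {c r : ℝ} (hfm : Measurable f) (hf0 : ∀ x, 0 ≤ f x) (hbm : Measurable b)
    (hr : 0 < r) (h_le : ∀ x, h x ≤ a x + f x * c + b x / r) :
    ∫⁻ x, ENNReal.ofReal (h x) ∂μ ≤
      (∫⁻ x, ENNReal.ofReal (a x) ∂μ) + (∫⁻ x, ENNReal.ofReal (f x) ∂μ) * ENNReal.ofReal c +
        (∫⁻ x, ENNReal.ofReal (b x) ∂μ) / ENNReal.ofReal r := by
  calc ∫⁻ x, ENNReal.ofReal (h x) ∂μ
      ≤ ∫⁻ x, (ENNReal.ofReal (a x) + ENNReal.ofReal (f x) * ENNReal.ofReal c +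
          ENNReal.ofReal (b x) * (ENNReal.ofReal r)⁻¹) ∂μ := by
        refine lintegral_mono fun x => ?_
        rw [← ENNReal.ofReal_mul (hf0 x), ← div_eq_mul_inv, ← ENNReal.ofReal_div_of_pos hr]
        exact (ENNReal.ofReal_le_ofReal (h_le x)).trans
          (ENNReal.ofReal_add_le.trans (add_le_add_left ENNReal.ofReal_add_le _))
    _ = _ := by
        rw [lintegral_add_right _ (by fun_prop), lintegral_add_right _ (by fun_prop),
          lintegral_mul_const _ (by fun_prop), lintegral_mul_const _ (by fun_prop), div_eq_mul_inv]

noncomputable def isotropicGaussianDensity (d : ℕ) (R : ℝ) (x : EuclideanSpace ℝ (Fin d)) : ℝ :=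
  ((2 * π * R ^ 2) ^ ((d : ℝ) / 2))⁻¹ * exp (-‖x‖ ^ 2 / (2 * R ^ 2))

section isotropicGaussianDensity

variable {d : ℕ} {R : ℝ}

lemma isotropicGaussianDensity_pos (hR : R ≠ 0) (x : EuclideanSpace ℝ (Fin d)) :
    0 < isotropicGaussianDensity d R x := by
  unfold isotropicGaussianDensity
  positivity

lemma isotropicGaussianDensity_le_one (hR : 1 ≤ 2 * π * R ^ 2) (x : EuclideanSpace ℝ (Fin d)) :
    isotropicGaussianDensity d R x ≤ 1 := by
  unfold isotropicGaussianDensity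
  have h_exp : exp (-‖x‖ ^ 2 / (2 * R ^ 2)) ≤ 1 :=
    exp_le_one_iff.2 (div_nonpos_of_nonpos_of_nonneg (by nlinarith) (by positivity))
  have h_norm : 1 ≤ (2 * π * R ^ 2) ^ ((d : ℝ) / 2) := one_le_rpow hR (by positivity)
  exact mul_le_one₀ (inv_le_one_of_one_le₀ h_norm) (exp_pos _).le h_exp

lemma neg_log_isotropicGaussianDensity (hR : R ≠ 0) (x : EuclideanSpace ℝ (Fin d)) :
    -log (isotropicGaussianDensity d R x) =
      (d : ℝ) / 2 * log (2 * π * R ^ 2) + ‖x‖ ^ 2 / (2 * R ^ 2) := by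
  unfold isotropicGaussianDensity
  rw [log_mul (by positivity) (exp_pos _).ne', log_inv, log_exp, log_rpow (by positivity)]
  ring

lemma logPlus_div_le_of_mul_isotropicGaussianDensity_le {α a b : ℝ} (hα0 : 0 < α) (hα1 : α ≤ 1)
    (hR : 1 ≤ 2 * π * R ^ 2) {x : EuclideanSpace ℝ (Fin d)}
    (hb : α * isotropicGaussianDensity d R x ≤ b) :
    logPlus (a / b) ≤ logPlus a + log (1 / α) +
      (d : ℝ) / 2 * log (2 * π * R ^ 2) + ‖x‖ ^ 2 / (2 * R ^ 2) := by
  have hR0 : R ≠ 0 := by rintro rfl; norm_num at hR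
  have hφ := isotropicGaussianDensity_pos hR0 x
  have h_le := logPlus_div_le (a := a) (mul_pos hα0 hφ)
    (mul_le_one₀ hα1 hφ.le (isotropicGaussianDensity_le_one hR x)) hb
  rw [log_mul hα0.ne' hφ.ne'] at h_le
  rw [one_div, log_inv]
  linarith [neg_log_isotropicGaussianDensity hR0 x]

end isotropicGaussianDensity

theorem tail_log_ratio_bound_general {d : ℕ}
    (f : EuclideanSpace ℝ (Fin d) → ℝ) (hf : IsProbDensity volume f)
    (F : Measure (EuclideanSpace ℝ (Fin d)))
    (hF : F = volume.withDensity fun x => ENNReal.ofReal (f x))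
    (R : ℝ) (hR : 1 ≤ R)
    (α : ℝ)
    (hα : ENNReal.ofReal α = ∫⁻ x in {x : EuclideanSpace ℝ (Fin d) | R < ‖x‖},
      ENNReal.ofReal (f x))
    (hα0 : 0 < α) (hα14 : α < 1 / 4)
    (φR : EuclideanSpace ℝ (Fin d) → ℝ)
    (hφR : ∀ x, φR x =
      ((2 * Real.pi * R ^ 2) ^ ((d : ℝ) / 2))⁻¹ * Real.exp (-‖x‖ ^ 2 / (2 * R ^ 2)))
    (g : EuclideanSpace ℝ (Fin d) → ℝ)
    (hlb : ∀ x, α * φR x ≤ g x) :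
    ∫⁻ x in {x : EuclideanSpace ℝ (Fin d) | R < ‖x‖},
        ENNReal.ofReal (logPlus (f x / g x)) ∂F ≤
      (∫⁻ x in {x : EuclideanSpace ℝ (Fin d) | R < ‖x‖},
        ENNReal.ofReal (f x * logPlus (f x))) +
      ENNReal.ofReal (α * Real.log (1 / α)) +
      ENNReal.ofReal (α * ((d : ℝ) / 2) * Real.log (2 * Real.pi * R ^ 2)) +
      (∫⁻ x in {x : EuclideanSpace ℝ (Fin d) | R < ‖x‖},
        ENNReal.ofReal (‖x‖ ^ 2 * f x)) / ENNReal.ofReal (2 * R ^ 2) := by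
  obtain ⟨hfm, hf0, -⟩ := hf
  obtain rfl : φR = isotropicGaussianDensity d R := funext hφR
  have hS : MeasurableSet {x : EuclideanSpace ℝ (Fin d) | R < ‖x‖} :=
    measurableSet_lt measurable_const measurable_norm
  have h2πR : 1 ≤ 2 * π * R ^ 2 := by nlinarith [pi_gt_three]
  set C := log (1 / α) + (d : ℝ) / 2 * log (2 * π * R ^ 2)
  have h_pointwise (x : EuclideanSpace ℝ (Fin d)) : f x * logPlus (f x / g x) ≤
      f x * logPlus (f x) + f x * C + ‖x‖ ^ 2 * f x / (2 * R ^ 2) := by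
    have h_le := logPlus_div_le_of_mul_isotropicGaussianDensity_le (a := f x) hα0 (by linarith)
      h2πR (hlb x)
    calc f x * logPlus (f x / g x)
        ≤ f x * (logPlus (f x) + log (1 / α) +
          (d : ℝ) / 2 * log (2 * π * R ^ 2) + ‖x‖ ^ 2 / (2 * R ^ 2)) := by gcongr; exact hf0 x
      _ = _ := by ring
  calc ∫⁻ x in {x | R < ‖x‖}, ENNReal.ofReal (logPlus (f x / g x)) ∂F
      = ∫⁻ x in {x | R < ‖x‖}, ENNReal.ofReal (f x * logPlus (f x / g x)) := by
        rw [hF, setLIntegral_withDensity_ofReal volume hfm hf0 hS]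
    _ ≤ (∫⁻ x in {x | R < ‖x‖}, ENNReal.ofReal (f x * logPlus (f x))) +
          ENNReal.ofReal (α * C) +
          (∫⁻ x in {x | R < ‖x‖}, ENNReal.ofReal (‖x‖ ^ 2 * f x)) / ENNReal.ofReal (2 * R ^ 2) := by
        rw [ENNReal.ofReal_mul hα0.le, hα]
        exact lintegral_ofReal_le_of_le_add_mul_add_div hfm hf0 (by fun_prop) (by positivity)
          h_pointwise
    _ ≤ _ := by
        rw [add_assoc _ (ENNReal.ofReal _) (ENNReal.ofReal _)]
        gcongr
        calc ENNReal.ofReal (α * C)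
            = ENNReal.ofReal (α * log (1 / α) + α * ((d : ℝ) / 2) * log (2 * π * R ^ 2)) := by
              congr 1; ring
          _ ≤ _ := ENNReal.ofReal_add_le

/-- tail bound for the positive log-ratio.  If `g ≥ α φ_R` pointwise,
where `φ_R` is the centered Gaussian density with covariance `R² I_d`, `R ≥ 1`, and
`α = ∫_{‖x‖>R} f dλ ∈ (0, 1/4)`, then
`∫_{‖x‖>R} log_+(f/g) dF ≤ β + α log(1/α) + α (d/2) log(2πR²) + μ₂/(2R²)`. -/
theorem tail_log_ratio_bound {d : ℕ}
    (f : EuclideanSpace ℝ (Fin d) → ℝ) (hf : IsProbDensity volume f)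
    (F : Measure (EuclideanSpace ℝ (Fin d)))
    (hF : F = volume.withDensity fun x => ENNReal.ofReal (f x))
    (R : ℝ) (hR : 1 ≤ R)
    (α : ℝ)
    (hα : ENNReal.ofReal α = ∫⁻ x in {x : EuclideanSpace ℝ (Fin d) | R < ‖x‖},
      ENNReal.ofReal (f x))
    (hα0 : 0 < α) (hα14 : α < 1 / 4)
    (φR : EuclideanSpace ℝ (Fin d) → ℝ)
    (hφR : ∀ x, φR x =
      ((2 * Real.pi * R ^ 2) ^ ((d : ℝ) / 2))⁻¹ * Real.exp (-‖x‖ ^ 2 / (2 * R ^ 2)))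
    (g : EuclideanSpace ℝ (Fin d) → ℝ) (hg : IsProbDensity volume g)
    (hlb : ∀ x, α * φR x ≤ g x) :
    ∫⁻ x in {x : EuclideanSpace ℝ (Fin d) | R < ‖x‖},
        ENNReal.ofReal (logPlus (f x / g x)) ∂F ≤
      (∫⁻ x in {x : EuclideanSpace ℝ (Fin d) | R < ‖x‖},
        ENNReal.ofReal (f x * logPlus (f x))) +
      ENNReal.ofReal (α * Real.log (1 / α)) +
      ENNReal.ofReal (α * ((d : ℝ) / 2) * Real.log (2 * Real.pi * R ^ 2)) +
      (∫⁻ x in {x : EuclideanSpace ℝ (Fin d) | R < ‖x‖},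
        ENNReal.ofReal (‖x‖ ^ 2 * f x)) / ENNReal.ofReal (2 * R ^ 2) :=
  tail_log_ratio_bound_general f hf F hF R hR α hα hα0 hα14 φR hφR g hlb
end
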